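/- arXiv:1306.6741 — 7 statements merged into one kernel-verified Lean document; each statement's English description precedes it below -/
import Mathlib

section
/- Let G be a finite connected simple graph and (x,y) an edge of G. Then there exists an integer-valued 1-Lipschitz function g : V(G) → ℤ with g(x) = 0 such that E_x(g) − E_y(g) = sup over all 1-Lipschitz f : V(G) → ℝ of (E_x(f) − E_y(f)). Consequently the Ricci curvature κ(x,y) is a rational number. -/
open SimpleGraph

/-- A function `f` on the vertices of `G` is 1-Lipschitz with respect to the
shortest-path distance. -/
def Lip {V : Type*} (G : SimpleGraph V) (f : V → ℝ) : Prop :=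
  ∀ a b : V, |f a - f b| ≤ (G.dist a b : ℝ)

/-- The degree of a vertex (as the cardinality of its neighbourhood). -/
noncomputable def deg {V : Type*} (G : SimpleGraph V) (x : V) : ℕ :=
  (G.neighborSet x).ncard

/-- `Ef G x f = (1/deg x) ∑_{z ∈ N(x)} f z`. -/
noncomputable def Ef {V : Type*} (G : SimpleGraph V) (x : V) (f : V → ℝ) : ℝ :=
  (∑ᶠ z ∈ G.neighborSet x, f z) / (deg G x)

/-- Ollivier's Ricci curvature `κ(x,y) = 1 - sup_{f 1-Lipschitz} (E_x(f) - E_y(f))`. -/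
noncomputable def kappa {V : Type*} (G : SimpleGraph V) (x y : V) : ℝ :=
  1 - sSup {t : ℝ | ∃ f : V → ℝ, Lip G f ∧ t = Ef G x f - Ef G y f}

section Aux

open intervalIntegral MeasureTheory

private lemma floor_lip' {a b : ℝ} {n : ℕ} (h : |a - b| ≤ (n : ℝ)) :
    |((⌊a⌋ : ℝ)) - (⌊b⌋ : ℝ)| ≤ (n : ℝ) := by
  rw [abs_sub_le_iff] at h ⊢
  constructor
  · have : a ≤ b + (n : ℤ) := by push_cast; linarith [h.1]
    have := Int.floor_le_floor this
    rw [Int.floor_add_intCast] at this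
    have h' : ((⌊a⌋:ℝ)) ≤ (⌊b⌋:ℝ) + n := by exact_mod_cast this
    linarith
  · have : b ≤ a + (n : ℤ) := by push_cast; linarith [h.2]
    have := Int.floor_le_floor this
    rw [Int.floor_add_intCast] at this
    have h' : ((⌊b⌋:ℝ)) ≤ (⌊a⌋:ℝ) + n := by exact_mod_cast this
    linarith

private lemma integral_floor_fract' {r : ℝ} (h0 : 0 ≤ r) (h1 : r < 1) :
    ∫ θ in (0:ℝ)..1, ((⌊r + θ⌋ : ℤ) : ℝ) = r := by
  have hmono : Monotone fun θ : ℝ => ((⌊r + θ⌋ : ℤ) : ℝ) := by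
    intro s t hst
    show ((⌊r + s⌋ : ℤ) : ℝ) ≤ ((⌊r + t⌋ : ℤ) : ℝ)
    exact_mod_cast Int.floor_le_floor (by linarith)
  have hsplit := integral_add_adjacent_intervals
    (a := (0:ℝ)) (b := 1 - r) (c := 1) (μ := volume) (f := fun θ : ℝ => ((⌊r + θ⌋ : ℤ) : ℝ))
    hmono.intervalIntegrable hmono.intervalIntegrable
  have h2 : ∫ θ in (1 - r)..1, ((⌊r + θ⌋ : ℤ) : ℝ) = r := by
    rw [integral_congr (g := fun _ => (1:ℝ)) ?_]
    · simp [smul_eq_mul]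
    · intro θ hθ
      rw [Set.uIcc_of_le (by linarith)] at hθ
      have h1' : (1:ℝ) ≤ r + θ := by linarith [hθ.1]
      have h2' : r + θ < 2 := by linarith [hθ.2]
      have : ⌊r + θ⌋ = 1 := by
        rw [Int.floor_eq_iff]
        push_cast; constructor <;> linarith
      simp [this]
  have h3 : ∫ θ in (0:ℝ)..(1 - r), ((⌊r + θ⌋ : ℤ) : ℝ) = 0 := by
    rw [intervalIntegral.integral_congr_ae (g := fun _ => (0:ℝ)) ?_]
    · simp
    · have hae : ∀ᵐ θ : ℝ, θ ∉ ({1 - r} : Set ℝ) :=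
        measure_eq_zero_iff_ae_notMem.mp Real.volume_singleton
      filter_upwards [hae] with θ hθ hmem
      rw [Set.uIoc_of_le (by linarith)] at hmem
      have hne : θ ≠ 1 - r := by simpa using hθ
      have hlt : θ < 1 - r := lt_of_le_of_ne hmem.2 hne
      have : ⌊r + θ⌋ = 0 := by
        rw [Int.floor_eq_iff]
        push_cast
        constructor <;> linarith [hmem.1]
      simp [this]
  rw [← hsplit, h2, h3, zero_add]

private lemma floor_intCast_add_fract' (n : ℤ) (u : ℝ) : ⌊(n : ℝ) + u⌋ = n + ⌊u⌋ :=
  Int.floor_intCast_add n u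

private lemma integral_floor_add' (c : ℝ) :
    ∫ θ in (0:ℝ)..1, ((⌊c + θ⌋ : ℤ) : ℝ) = c := by
  have key : ∀ θ : ℝ, ⌊c + θ⌋ = ⌊c⌋ + ⌊Int.fract c + θ⌋ := by
    intro θ
    conv_lhs => rw [← Int.floor_add_fract c, add_assoc, floor_intCast_add_fract']
  have : (fun θ : ℝ => ((⌊c + θ⌋ : ℤ) : ℝ))
      = fun θ : ℝ => ((⌊c⌋ : ℝ) + ((⌊Int.fract c + θ⌋ : ℤ) : ℝ)) := by
    funext θ; rw [key θ]; push_cast; ring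
  rw [this]
  have hmono : Monotone fun θ : ℝ => ((⌊Int.fract c + θ⌋ : ℤ) : ℝ) := by
    intro s t hst
    show ((⌊Int.fract c + s⌋ : ℤ) : ℝ) ≤ ((⌊Int.fract c + t⌋ : ℤ) : ℝ)
    exact_mod_cast Int.floor_le_floor (by linarith)
  rw [integral_add (by simp) hmono.intervalIntegrable,
    integral_floor_fract' (Int.fract_nonneg c) (Int.fract_lt_one c)]
  have := Int.floor_add_fract c
  simp only [intervalIntegral.integral_const, smul_eq_mul]
  linarith

end Aux

open intervalIntegral MeasureTheory

/-- There is an integer-valued 1-Lipschitz function `g` with `g x = 0` attaining the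
supremum defining `W₁(m_x, m_y)`; consequently `κ(x,y)` is rational. -/
theorem integer_optimal_lipschitz {V : Type*} [Fintype V] (G : SimpleGraph V)
    (hG : G.Connected) (x y : V) (hxy : G.Adj x y) :
    ∃ g : V → ℤ, Lip G (fun v => (g v : ℝ)) ∧ g x = 0 ∧
      Ef G x (fun v => (g v : ℝ)) - Ef G y (fun v => (g v : ℝ)) =
        sSup {t : ℝ | ∃ f : V → ℝ, Lip G f ∧ t = Ef G x f - Ef G y f} ∧
      ∃ q : ℚ, kappa G x y = (q : ℝ) := by
  classical
  set S := {t : ℝ | ∃ f : V → ℝ, Lip G f ∧ t = Ef G x f - Ef G y f} with hSdef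
  set Nx := (G.neighborSet x).toFinset with hNx
  set Ny := (G.neighborSet y).toFinset with hNy
  set F : (V → ℝ) → ℝ :=
    fun f => (∑ z ∈ Nx, f z) / (Nx.card : ℝ) - (∑ z ∈ Ny, f z) / (Ny.card : ℝ) with hFdef
  have hEf : ∀ (v : V) (f : V → ℝ),
      Ef G v f = (∑ z ∈ (G.neighborSet v).toFinset, f z) / (((G.neighborSet v).toFinset.card : ℕ) : ℝ) := by
    intro v f
    rw [Ef, deg, Set.ncard_eq_toFinset_card']
    congr 1
    rw [← finsum_mem_coe_finset, Set.coe_toFinset]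
  have hF : ∀ f : V → ℝ, Ef G x f - Ef G y f = F f := by
    intro f
    rw [hEf, hEf, hFdef]
  have hdx : (0:ℝ) < Nx.card := by
    have : y ∈ Nx := by simp [hNx, hxy]
    exact_mod_cast Finset.card_pos.mpr ⟨y, this⟩
  have hdy : (0:ℝ) < Ny.card := by
    have : x ∈ Ny := by simp [hNy, hxy.symm]
    exact_mod_cast Finset.card_pos.mpr ⟨x, this⟩
  have hFshift : ∀ (f : V → ℝ) (c : ℝ), F (fun v => f v - c) = F f := by
    intro f c
    rw [hFdef]
    simp only [Finset.sum_sub_distrib, Finset.sum_const, nsmul_eq_mul, sub_div]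
    field_simp
    ring
  -- compactness
  set K : Set (V → ℝ) := {f | Lip G f ∧ f x = 0} with hKdef
  have hK0 : (fun _ => (0:ℝ)) ∈ K := by
    refine ⟨fun a b => ?_, rfl⟩
    simp
  have hKc : IsClosed K := by
    have : K = (⋂ a, ⋂ b, {f : V → ℝ | |f a - f b| ≤ (G.dist a b : ℝ)}) ∩ {f | f x = 0} := by
      ext f
      simp [hKdef, Lip, Set.mem_iInter]
    rw [this]
    refine IsClosed.inter (isClosed_iInter fun a => isClosed_iInter fun b => ?_)
      (isClosed_eq (continuous_apply x) continuous_const)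
    exact isClosed_le (Continuous.abs ((continuous_apply a).sub (continuous_apply b)))
      continuous_const
  have hKb : Bornology.IsBounded K := by
    set D : ℕ := Finset.univ.sup (fun v => G.dist v x) with hD
    refine (Metric.isBounded_closedBall (x := (0 : V → ℝ)) (r := (D:ℝ))).subset ?_
    intro f hf
    rw [Metric.mem_closedBall, dist_pi_le_iff (by positivity)]
    intro v
    have h1 : |f v - f x| ≤ (G.dist v x : ℝ) := hf.1 v x
    have h2 : (G.dist v x : ℝ) ≤ (D : ℝ) := by
      exact_mod_cast Finset.le_sup (f := fun v => G.dist v x) (Finset.mem_univ v)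
    rw [hf.2, sub_zero] at h1
    rw [Real.dist_eq]
    simp only [Pi.zero_apply, sub_zero]
    linarith
  have hKcomp : IsCompact K := Metric.isCompact_of_isClosed_isBounded hKc hKb
  have hFcont : Continuous F := by
    refine Continuous.sub ?_ ?_ <;>
      exact (continuous_finset_sum _ fun z _ => continuous_apply z).div_const _
  obtain ⟨f₀, hf₀K, hf₀max⟩ := hKcomp.exists_isMaxOn ⟨_, hK0⟩ hFcont.continuousOn
  -- the sup equals F f₀
  have hmem : ∀ f : V → ℝ, Lip G f → F f ∈ S := fun f hf => ⟨f, hf, (hF f).symm⟩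
  have hub : ∀ t ∈ S, t ≤ F f₀ := by
    rintro t ⟨f, hf, rfl⟩
    rw [hF f]
    have hfK : (fun v => f v - f x) ∈ K := by
      refine ⟨fun a b => ?_, by simp⟩
      simpa using hf a b
    calc F f = F (fun v => f v - f x) := (hFshift f (f x)).symm
      _ ≤ F f₀ := hf₀max hfK
  have hSne : S.Nonempty := ⟨F (fun _ => 0), hmem _ hK0.1⟩
  have hMS : sSup S = F f₀ :=
    le_antisymm (csSup_le hSne hub) (le_csSup ⟨F f₀, hub⟩ (hmem f₀ hf₀K.1))
  set M := F f₀ with hM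
  -- rounding family
  have hgLip : ∀ θ : ℝ, Lip G (fun v => ((⌊f₀ v + θ⌋ : ℤ) : ℝ)) := by
    intro θ a b
    have := hf₀K.1 a b
    refine floor_lip' ?_
    simpa using this
  set A : ℝ → ℝ := fun θ => (∑ z ∈ Nx, ((⌊f₀ z + θ⌋ : ℤ) : ℝ)) / (Nx.card : ℝ) with hA
  set B : ℝ → ℝ := fun θ => (∑ z ∈ Ny, ((⌊f₀ z + θ⌋ : ℤ) : ℝ)) / (Ny.card : ℝ) with hB
  have hφF : ∀ θ : ℝ, F (fun v => ((⌊f₀ v + θ⌋ : ℤ) : ℝ)) = A θ - B θ := fun θ => rfl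
  have hφle : ∀ θ : ℝ, A θ - B θ ≤ M := by
    intro θ
    rw [← hφF]
    exact hub _ (hmem _ (hgLip θ))
  have hmono1 : ∀ z : V, Monotone fun θ : ℝ => ((⌊f₀ z + θ⌋ : ℤ) : ℝ) := by
    intro z s t hst
    show ((⌊f₀ z + s⌋ : ℤ) : ℝ) ≤ ((⌊f₀ z + t⌋ : ℤ) : ℝ)
    exact_mod_cast Int.floor_le_floor (by linarith)
  have hAmono : Monotone A := by
    intro s t hst
    have hsum := Finset.sum_le_sum (fun z (_ : z ∈ Nx) => hmono1 z hst)
    exact (div_le_div_iff_of_pos_right hdx).mpr hsum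
  have hBmono : Monotone B := by
    intro s t hst
    have hsum := Finset.sum_le_sum (fun z (_ : z ∈ Ny) => hmono1 z hst)
    exact (div_le_div_iff_of_pos_right hdy).mpr hsum
  -- integration of the rounding family
  have hAint : IntervalIntegrable A volume 0 1 := hAmono.intervalIntegrable
  have hBint : IntervalIntegrable B volume 0 1 := hBmono.intervalIntegrable
  have hφint : IntervalIntegrable (fun θ => A θ - B θ) volume 0 1 := hAint.sub hBint
  have hintA : ∫ θ in (0:ℝ)..1, A θ = (∑ z ∈ Nx, f₀ z) / (Nx.card : ℝ) := by
    rw [hA]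
    rw [intervalIntegral.integral_div]
    congr 1
    rw [intervalIntegral.integral_finset_sum (fun z _ => (hmono1 z).intervalIntegrable)]
    exact Finset.sum_congr rfl fun z _ => integral_floor_add' (f₀ z)
  have hintB : ∫ θ in (0:ℝ)..1, B θ = (∑ z ∈ Ny, f₀ z) / (Ny.card : ℝ) := by
    rw [hB]
    rw [intervalIntegral.integral_div]
    congr 1
    rw [intervalIntegral.integral_finset_sum (fun z _ => (hmono1 z).intervalIntegrable)]
    exact Finset.sum_congr rfl fun z _ => integral_floor_add' (f₀ z)
  have hint : ∫ θ in (0:ℝ)..1, (A θ - B θ) = M := by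
    rw [intervalIntegral.integral_sub hAint hBint, hintA, hintB, hM, hFdef]
  have hex : ∃ θ ∈ Set.Ioo (0:ℝ) 1, M ≤ A θ - B θ := by
    by_contra h
    push_neg at h
    have hpos : 0 < ∫ θ in (0:ℝ)..1, (M - (A θ - B θ)) := by
      refine intervalIntegral_pos_of_pos_on (intervalIntegrable_const.sub hφint) ?_ one_pos
      intro t ht
      have := h t ht
      linarith
    rw [intervalIntegral.integral_sub intervalIntegrable_const hφint, hint,
      intervalIntegral.integral_const] at hpos
    simp at hpos
  obtain ⟨θ, hθI, hθge⟩ := hex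
  have hθeq : A θ - B θ = M := le_antisymm (hφle θ) hθge
  refine ⟨fun v => ⌊f₀ v + θ⌋, hgLip θ, ?_, ?_, ?_⟩
  · show ⌊f₀ x + θ⌋ = 0
    have hx0 : f₀ x = 0 := hf₀K.2
    rw [hx0, zero_add]
    exact Int.floor_eq_zero_iff.mpr ⟨hθI.1.le, hθI.2⟩
  · show Ef G x (fun v => ((⌊f₀ v + θ⌋ : ℤ) : ℝ)) - Ef G y (fun v => ((⌊f₀ v + θ⌋ : ℤ) : ℝ)) = sSup S
    rw [hF, hφF, hθeq]
    exact hMS.symm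
  · refine ⟨1 - ((∑ z ∈ Nx, ⌊f₀ z + θ⌋ : ℤ) : ℚ) / (Nx.card : ℚ)
      + ((∑ z ∈ Ny, ⌊f₀ z + θ⌋ : ℤ) : ℚ) / (Ny.card : ℚ), ?_⟩
    rw [kappa, ← hSdef, hMS, ← hθeq, hA, hB]
    push_cast
    ring
end

section
/- In the complete bipartite graph K_{p,q} (with p ≤ q, both parts nonempty), every edge (x,y) has Ollivier Ricci curvature κ(x,y) = 0. -/
open SimpleGraph

section Aux

set_option linter.unusedSectionVars false

variable {α β : Type*} [Fintype α] [Fintype β] [Nonempty α] [Nonempty β]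

lemma neighborSet_inl (a : α) :
    (completeBipartiteGraph α β).neighborSet (Sum.inl a) = Set.range Sum.inr := by
  ext z; cases z <;> simp

lemma neighborSet_inr (b : β) :
    (completeBipartiteGraph α β).neighborSet (Sum.inr b) = Set.range Sum.inl := by
  ext z; cases z <;> simp

lemma ncard_range_inr : (Set.range (Sum.inr : β → α ⊕ β)).ncard = Fintype.card β := by
  rw [← Set.image_univ, Set.ncard_image_of_injective _ Sum.inr_injective, Set.ncard_univ,
    Nat.card_eq_fintype_card]

lemma ncard_range_inl : (Set.range (Sum.inl : α → α ⊕ β)).ncard = Fintype.card α := by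
  rw [← Set.image_univ, Set.ncard_image_of_injective _ Sum.inl_injective, Set.ncard_univ,
    Nat.card_eq_fintype_card]

lemma Ef_inl (a : α) (f : α ⊕ β → ℝ) :
    Ef (completeBipartiteGraph α β) (Sum.inl a) f
      = (∑ b, f (Sum.inr b)) / (Fintype.card β : ℝ) := by
  rw [Ef, deg, neighborSet_inl, ncard_range_inr,
    finsum_mem_range Sum.inr_injective, finsum_eq_sum_of_fintype]

lemma Ef_inr (b : β) (f : α ⊕ β → ℝ) :
    Ef (completeBipartiteGraph α β) (Sum.inr b) f
      = (∑ a, f (Sum.inl a)) / (Fintype.card α : ℝ) := by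
  rw [Ef, deg, neighborSet_inr, ncard_range_inl,
    finsum_mem_range Sum.inl_injective, finsum_eq_sum_of_fintype]

lemma lip_bound (f : α ⊕ β → ℝ) (hf : Lip (completeBipartiteGraph α β) f)
    (u v : α ⊕ β) (huv : (completeBipartiteGraph α β).Adj u v) :
    f u - f v ≤ 1 := by
  have h := hf u v
  rw [SimpleGraph.dist_eq_one_iff_adj.mpr huv] at h
  have := abs_le.mp (by simpa using h)
  linarith [this.2]

lemma diff_avg_le (f : α ⊕ β → ℝ) (hf : Lip (completeBipartiteGraph α β) f) :
    (∑ b, f (Sum.inr b)) / (Fintype.card β : ℝ)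
      - (∑ a, f (Sum.inl a)) / (Fintype.card α : ℝ) ≤ 1 := by
  have hp : (0:ℝ) < Fintype.card α := by positivity
  have hq : (0:ℝ) < Fintype.card β := by positivity
  rw [div_sub_div _ _ (ne_of_gt hq) (ne_of_gt hp), div_le_one (by positivity)]
  have key : (∑ b, f (Sum.inr b)) * (Fintype.card α : ℝ)
      - (Fintype.card β : ℝ) * ∑ a, f (Sum.inl a)
      = ∑ a : α, ∑ b : β, (f (Sum.inr b) - f (Sum.inl a)) := by
    simp [Finset.sum_sub_distrib, Finset.card_univ, Finset.mul_sum, mul_comm]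
  rw [key]
  calc ∑ a : α, ∑ b : β, (f (Sum.inr b) - f (Sum.inl a))
      ≤ ∑ _a : α, ∑ _b : β, (1:ℝ) := by
        apply Finset.sum_le_sum; intro a _; apply Finset.sum_le_sum; intro b _
        exact lip_bound f hf _ _ (by simp)
    _ = (Fintype.card β : ℝ) * Fintype.card α := by simp [mul_comm]

lemma diff_avg_le' (f : α ⊕ β → ℝ) (hf : Lip (completeBipartiteGraph α β) f) :
    (∑ a, f (Sum.inl a)) / (Fintype.card α : ℝ)
      - (∑ b, f (Sum.inr b)) / (Fintype.card β : ℝ) ≤ 1 := by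
  have hp : (0:ℝ) < Fintype.card α := by positivity
  have hq : (0:ℝ) < Fintype.card β := by positivity
  rw [div_sub_div _ _ (ne_of_gt hp) (ne_of_gt hq), div_le_one (by positivity)]
  have key : (∑ a, f (Sum.inl a)) * (Fintype.card β : ℝ)
      - (Fintype.card α : ℝ) * ∑ b, f (Sum.inr b)
      = ∑ a : α, ∑ b : β, (f (Sum.inl a) - f (Sum.inr b)) := by
    simp [Finset.sum_sub_distrib, Finset.card_univ, Finset.mul_sum, mul_comm]
  rw [key]
  calc ∑ a : α, ∑ b : β, (f (Sum.inl a) - f (Sum.inr b))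
      ≤ ∑ _a : α, ∑ _b : β, (1:ℝ) := by
        apply Finset.sum_le_sum; intro a _; apply Finset.sum_le_sum; intro b _
        exact lip_bound f hf _ _ (by simp)
    _ = (Fintype.card α : ℝ) * Fintype.card β := by simp [mul_comm]

lemma lip_indicator_inr :
    Lip (completeBipartiteGraph α β) (fun z => if z.isRight then (1:ℝ) else 0) := by
  intro u v
  rcases u with a | b <;> rcases v with a' | b' <;> simp only [Sum.isRight] <;> norm_num <;>
    rw [SimpleGraph.dist_eq_one_iff_adj.mpr (by simp)] <;> norm_num

lemma lip_indicator_inl :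
    Lip (completeBipartiteGraph α β) (fun z => if z.isLeft then (1:ℝ) else 0) := by
  intro u v
  rcases u with a | b <;> rcases v with a' | b' <;> simp only [Sum.isLeft] <;> norm_num <;>
    rw [SimpleGraph.dist_eq_one_iff_adj.mpr (by simp)] <;> norm_num

end Aux

/-- In the complete bipartite graph `K_{p,q}` (`p ≤ q`, both parts nonempty), every
edge has Ollivier Ricci curvature 0. -/
theorem kappa_completeBipartite_eq_zero {α β : Type*} [Fintype α] [Fintype β]
    [Nonempty α] [Nonempty β] (hpq : Fintype.card α ≤ Fintype.card β)
    (x y : α ⊕ β) (hxy : (completeBipartiteGraph α β).Adj x y) :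
    kappa (completeBipartiteGraph α β) x y = 0 := by
  have hp : (0:ℝ) < Fintype.card α := by positivity
  have hq : (0:ℝ) < Fintype.card β := by positivity
  set S := {t : ℝ | ∃ f : α ⊕ β → ℝ,
      Lip (completeBipartiteGraph α β) f ∧
      t = Ef (completeBipartiteGraph α β) x f - Ef (completeBipartiteGraph α β) y f} with hS
  suffices h : sSup S = 1 by rw [kappa, ← hS, h]; ring
  have hbdd : ∀ t ∈ S, t ≤ 1 := by
    rintro t ⟨f, hf, rfl⟩
    rcases x with a | b <;> rcases y with a' | b'
    · simp at hxy
    · rw [Ef_inl, Ef_inr]; exact diff_avg_le f hf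
    · rw [Ef_inl, Ef_inr]; exact diff_avg_le' f hf
    · simp at hxy
  have hmem : (1:ℝ) ∈ S := by
    rcases x with a | b <;> rcases y with a' | b'
    · simp at hxy
    · refine ⟨fun z => if z.isRight then (1:ℝ) else 0, lip_indicator_inr, ?_⟩
      rw [Ef_inl, Ef_inr]
      simp [div_self (ne_of_gt hq)]
    · refine ⟨fun z => if z.isLeft then (1:ℝ) else 0, lip_indicator_inl, ?_⟩
      rw [Ef_inl, Ef_inr]
      simp [div_self (ne_of_gt hp)]
    · simp at hxy
  exact le_antisymm (csSup_le ⟨1, hmem⟩ hbdd) (le_csSup ⟨1, hbdd⟩ hmem)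
end

section
/- Let G be a locally finite connected simple graph and (x,y) an edge of G. Let Δ_G(x,y) = N(x) ∩ N(y), Q(x) = N(x) \ Δ_G(x,y), Q(y) = N(y) \ Δ_G(x,y), and let M_G(x,y) be a maximum collection of pairwise disjoint edges of G each joining a vertex of Q(x) to a vertex of Q(y). Then κ(x,y) ≥ |Δ_G(x,y)|/max(deg(x), deg(y)) − 2·(1 − (|M_G(x,y)| + |Δ_G(x,y)|)/max(deg(x), deg(y))). In particular, if |M_G(x,y)| = min(|Q(x)|, |Q(y)|), then κ(x,y) ≥ |Δ_G(x,y)|/max(deg(x), deg(y)) − 2·(1 − min(deg(x), deg(y))/max(deg(x), deg(y))). -/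
open SimpleGraph

/-- A matching of size `k` in `G` between two disjoint vertex sets `A` and `B`:
`k` pairwise vertex-disjoint edges of `G`, each joining a vertex of `A` to a
vertex of `B`. -/
def MatchingBetween {V : Type*} (G : SimpleGraph V) (A B : Set V) (k : ℕ) : Prop :=
  ∃ a b : Fin k → V, Function.Injective a ∧ Function.Injective b ∧
    (∀ i, a i ∈ A) ∧ (∀ i, b i ∈ B) ∧ (∀ i, G.Adj (a i) (b i)) ∧
    (∀ i j, a i ≠ b j)

set_option maxHeartbeats 1000000 in
/-- **Matching lower bound for the Ricci curvature.** If `k` is the size of a maximum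
matching between `Q(x) = N(x) \ Δ` and `Q(y) = N(y) \ Δ`, where `Δ = N(x) ∩ N(y)`, then
`κ(x,y) ≥ |Δ|/(dₓ ∨ d_y) − 2 (1 − (k + |Δ|)/(dₓ ∨ d_y))`; if moreover
`k = |Q(x)| ∧ |Q(y)|` then `κ(x,y) ≥ |Δ|/(dₓ ∨ d_y) − 2 (1 − (dₓ ∧ d_y)/(dₓ ∨ d_y))`. -/
theorem kappa_matching_lower_bound {V : Type*} (G : SimpleGraph V)
    (hlf : ∀ v : V, (G.neighborSet v).Finite) (hG : G.Connected)
    (x y : V) (hxy : G.Adj x y) (k : ℕ)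
    (hmatch : MatchingBetween G (G.neighborSet x \ (G.neighborSet x ∩ G.neighborSet y))
      (G.neighborSet y \ (G.neighborSet x ∩ G.neighborSet y)) k)
    (hmax : ∀ j : ℕ,
      MatchingBetween G (G.neighborSet x \ (G.neighborSet x ∩ G.neighborSet y))
        (G.neighborSet y \ (G.neighborSet x ∩ G.neighborSet y)) j → j ≤ k) :
    kappa G x y ≥
      ((G.neighborSet x ∩ G.neighborSet y).ncard : ℝ) / (max (deg G x) (deg G y) : ℝ)
        - 2 * (1 - ((k : ℝ) + ((G.neighborSet x ∩ G.neighborSet y).ncard : ℝ)) /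
            (max (deg G x) (deg G y) : ℝ)) ∧
    (k = min ((G.neighborSet x \ (G.neighborSet x ∩ G.neighborSet y)).ncard)
             ((G.neighborSet y \ (G.neighborSet x ∩ G.neighborSet y)).ncard) →
      kappa G x y ≥
        ((G.neighborSet x ∩ G.neighborSet y).ncard : ℝ) / (max (deg G x) (deg G y) : ℝ)
          - 2 * (1 - (min (deg G x) (deg G y) : ℝ) / (max (deg G x) (deg G y) : ℝ))) := by

  classical
  obtain ⟨a, b, hainj, hbinj, haQ, hbQ, hadj, habne⟩ := hmatch
  set Nx : Finset V := (hlf x).toFinset with hNxdef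
  set Ny : Finset V := (hlf y).toFinset with hNydef
  have hmemx : ∀ z, z ∈ Nx ↔ G.Adj x z := fun z => by
    rw [hNxdef, Set.Finite.mem_toFinset, mem_neighborSet]
  have hmemy : ∀ z, z ∈ Ny ↔ G.Adj y z := fun z => by
    rw [hNydef, Set.Finite.mem_toFinset, mem_neighborSet]
  set Δs : Finset V := Nx ∩ Ny with hΔdef
  have hmemΔ : ∀ z, z ∈ Δs ↔ z ∈ G.neighborSet x ∩ G.neighborSet y := fun z => by
    rw [hΔdef, Finset.mem_inter]
    simp [hmemx z, hmemy z, Set.mem_inter_iff, mem_neighborSet]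
  have hdx : deg G x = Nx.card := Set.ncard_eq_toFinset_card _ (hlf x)
  have hdy : deg G y = Ny.card := Set.ncard_eq_toFinset_card _ (hlf y)
  have hΔcard : (G.neighborSet x ∩ G.neighborSet y).ncard = Δs.card := by
    rw [Set.ncard_eq_toFinset_card _ ((hlf x).inter_of_left _)]
    congr 1
    ext z
    rw [Set.Finite.mem_toFinset, hmemΔ z]
  -- the matching images
  set A : Finset V := Finset.image a Finset.univ with hAdef
  set B : Finset V := Finset.image b Finset.univ with hBdef
  have hAcard : A.card = k := by
    rw [hAdef, Finset.card_image_of_injective _ hainj, Finset.card_univ, Fintype.card_fin]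
  have hBcard : B.card = k := by
    rw [hBdef, Finset.card_image_of_injective _ hbinj, Finset.card_univ, Fintype.card_fin]
  have haNx : ∀ i, a i ∈ Nx := fun i => (hmemx _).mpr ((haQ i).1)
  have hbNy : ∀ i, b i ∈ Ny := fun i => (hmemy _).mpr ((hbQ i).1)
  have haΔ : ∀ i, a i ∉ Δs := fun i hi => (haQ i).2 ((hmemΔ _).mp hi)
  have hbΔ : ∀ i, b i ∉ Δs := fun i hi => (hbQ i).2 ((hmemΔ _).mp hi)
  have hAsub : A ⊆ Nx := by
    intro z hz
    obtain ⟨i, _, rfl⟩ := Finset.mem_image.mp hz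
    exact haNx i
  have hBsub : B ⊆ Ny := by
    intro z hz
    obtain ⟨i, _, rfl⟩ := Finset.mem_image.mp hz
    exact hbNy i
  have hAdisj : Disjoint Δs A := by
    rw [Finset.disjoint_right]
    intro z hz
    obtain ⟨i, _, rfl⟩ := Finset.mem_image.mp hz
    exact haΔ i
  have hBdisj : Disjoint Δs B := by
    rw [Finset.disjoint_right]
    intro z hz
    obtain ⟨i, _, rfl⟩ := Finset.mem_image.mp hz
    exact hbΔ i
  have hsubx : Δs ∪ A ⊆ Nx := Finset.union_subset (Finset.inter_subset_left) hAsub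
  have hsuby : Δs ∪ B ⊆ Ny := Finset.union_subset
    (by rw [hΔdef]; exact Finset.inter_subset_right) hBsub
  set Rx : Finset V := Nx \ (Δs ∪ A) with hRxdef
  set Ry : Finset V := Ny \ (Δs ∪ B) with hRydef
  -- real quantities
  set dxR : ℝ := (Nx.card : ℝ) with hdxRdef
  set dyR : ℝ := (Ny.card : ℝ) with hdyRdef
  set ΔR : ℝ := (Δs.card : ℝ) with hΔRdef
  set K : ℝ := (k : ℝ) with hKdef
  have hΔR0 : 0 ≤ ΔR := Nat.cast_nonneg _
  have hcardux : (Δs ∪ A).card = Δs.card + k := by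
    rw [Finset.card_union_of_disjoint hAdisj, hAcard]
  have hcarduy : (Δs ∪ B).card = Δs.card + k := by
    rw [Finset.card_union_of_disjoint hBdisj, hBcard]
  have hrx : (Rx.card : ℝ) = dxR - ΔR - K := by
    rw [hRxdef, Finset.card_sdiff_of_subset hsubx, Nat.cast_sub (Finset.card_le_card hsubx), hcardux]
    push_cast [hdxRdef, hΔRdef, hKdef]
    ring
  have hry : (Ry.card : ℝ) = dyR - ΔR - K := by
    rw [hRydef, Finset.card_sdiff_of_subset hsuby, Nat.cast_sub (Finset.card_le_card hsuby), hcarduy]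
    push_cast [hdyRdef, hΔRdef, hKdef]
    ring
  have hyNx : y ∈ Nx := (hmemx y).mpr hxy
  have hxNy : x ∈ Ny := (hmemy x).mpr hxy.symm
  have hdx0 : 0 < dxR := by
    rw [hdxRdef]
    exact_mod_cast Finset.card_pos.mpr ⟨y, hyNx⟩
  have hdy0 : 0 < dyR := by
    rw [hdyRdef]
    exact_mod_cast Finset.card_pos.mpr ⟨x, hxNy⟩
  have hDmR : ((max (deg G x) (deg G y) : ℕ) : ℝ) = max dxR dyR := by
    rw [hdx, hdy]
    push_cast
    rfl
  -- key bound for each Lipschitz function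
  have key : ∀ f : V → ℝ, Lip G f →
      Ef G x f - Ef G y f ≤ 3 - (3 * ΔR + 2 * K) / max dxR dyR := by
    intro f hf
    set g : V → ℝ := fun v => f v - f x with hgdef
    have hg1 : ∀ z ∈ Nx, |g z| ≤ 1 := by
      intro z hz
      have hd : G.dist z x = 1 := dist_eq_one_iff_adj.mpr ((hmemx z).mp hz).symm
      have := hf z x
      rw [hd] at this
      simpa [hgdef] using this
    have hg2 : ∀ w ∈ Ny, |g w| ≤ 2 := by
      intro w hw
      have hd1 : G.dist w y = 1 := dist_eq_one_iff_adj.mpr ((hmemy w).mp hw).symm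
      have hd2 : G.dist y x = 1 := dist_eq_one_iff_adj.mpr hxy.symm
      have htri : G.dist w x ≤ 2 := by
        have := hG.dist_triangle (u := w) (v := y) (w := x)
        omega
      have h1 := hf w x
      have h2 : (G.dist w x : ℝ) ≤ 2 := by exact_mod_cast htri
      have : |f w - f x| ≤ 2 := h1.trans h2
      simpa [hgdef] using this
    have hpair : ∀ i, g (a i) - g (b i) ≤ 1 := by
      intro i
      have hd : G.dist (a i) (b i) = 1 := dist_eq_one_iff_adj.mpr (hadj i)
      have := hf (a i) (b i)
      rw [hd] at this
      have := (abs_le.mp (by simpa using this)).2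
      simpa [hgdef] using by linarith [this]
    -- rewrite Ef as finset sums
    have hExf : Ef G x f = (∑ z ∈ Nx, f z) / dxR := by
      rw [Ef, finsum_mem_eq_finite_toFinset_sum f (hlf x), hdx]
    have hEyf : Ef G y f = (∑ w ∈ Ny, f w) / dyR := by
      rw [Ef, finsum_mem_eq_finite_toFinset_sum f (hlf y), hdy]
    have hshiftx : (∑ z ∈ Nx, g z) / dxR = (∑ z ∈ Nx, f z) / dxR - f x := by
      have : ∑ z ∈ Nx, g z = (∑ z ∈ Nx, f z) - dxR * f x := by
        simp [hgdef, Finset.sum_sub_distrib, hdxRdef, mul_comm]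
      rw [this, sub_div, mul_comm, mul_div_assoc, div_self (ne_of_gt hdx0), mul_one]
    have hshifty : (∑ w ∈ Ny, g w) / dyR = (∑ w ∈ Ny, f w) / dyR - f x := by
      have : ∑ w ∈ Ny, g w = (∑ w ∈ Ny, f w) - dyR * f x := by
        simp [hgdef, Finset.sum_sub_distrib, hdyRdef, mul_comm]
      rw [this, sub_div, mul_comm, mul_div_assoc, div_self (ne_of_gt hdy0), mul_one]
    have hEdiff : Ef G x f - Ef G y f
        = (∑ z ∈ Nx, g z) / dxR - (∑ w ∈ Ny, g w) / dyR := by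
      rw [hExf, hEyf, hshiftx, hshifty]
      ring
    -- split the sums
    set SΔ : ℝ := ∑ z ∈ Δs, g z
    set Sa : ℝ := ∑ i : Fin k, g (a i)
    set Sb : ℝ := ∑ i : Fin k, g (b i)
    set SRx : ℝ := ∑ z ∈ Rx, g z
    set SRy : ℝ := ∑ w ∈ Ry, g w
    have hsplitx : ∑ z ∈ Nx, g z = SRx + (SΔ + Sa) := by
      rw [← Finset.sum_sdiff hsubx, Finset.sum_union hAdisj,
        Finset.sum_image (fun i _ j _ h => hainj h), ← hRxdef]
    have hsplity : ∑ w ∈ Ny, g w = SRy + (SΔ + Sb) := by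
      rw [← Finset.sum_sdiff hsuby, Finset.sum_union hBdisj,
        Finset.sum_image (fun i _ j _ h => hbinj h), ← hRydef]
    -- sum bounds
    have hSΔb : |SΔ| ≤ ΔR := by
      refine (Finset.abs_sum_le_sum_abs _ _).trans ?_
      have := Finset.sum_le_card_nsmul Δs (fun z => |g z|) 1
        (fun z hz => hg1 z (Finset.inter_subset_left hz))
      simpa [hΔRdef] using this
    have hSab : Sa - Sb ≤ K := by
      rw [← Finset.sum_sub_distrib]
      have := Finset.sum_le_card_nsmul Finset.univ (fun i => g (a i) - g (b i)) 1
        (fun i _ => hpair i)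
      simpa [hKdef] using this
    have hSa : |Sa| ≤ K := by
      refine (Finset.abs_sum_le_sum_abs _ _).trans ?_
      have := Finset.sum_le_card_nsmul Finset.univ (fun i => |g (a i)|) 1
        (fun i _ => hg1 _ (haNx i))
      simpa [hKdef] using this
    have hSb : |Sb| ≤ 2 * K := by
      refine (Finset.abs_sum_le_sum_abs _ _).trans ?_
      have := Finset.sum_le_card_nsmul Finset.univ (fun i => |g (b i)|) 2
        (fun i _ => hg2 _ (hbNy i))
      have h2 : ((Finset.univ : Finset (Fin k)).card : ℝ) • (2:ℝ) = 2 * K := by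
        simp [hKdef, mul_comm]
      calc ∑ i : Fin k, |g (b i)| ≤ (Finset.univ : Finset (Fin k)).card • (2:ℝ) := this
        _ = 2 * K := by simp [hKdef, mul_comm]
    have hSRxb : SRx ≤ dxR - ΔR - K := by
      rw [← hrx]
      have := Finset.sum_le_card_nsmul Rx g 1
        (fun z hz => (abs_le.mp (hg1 z (Finset.sdiff_subset hz))).2)
      simpa using this
    have hSRyb : -SRy ≤ 2 * (dyR - ΔR - K) := by
      rw [← hry]
      have := Finset.sum_le_card_nsmul Ry (fun w => -g w) 2
        (fun w hw => by
          show -g w ≤ 2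
          have := (abs_le.mp (hg2 w (Finset.sdiff_subset hw))).1
          linarith)
      calc -SRy = ∑ w ∈ Ry, -g w := by rw [← Finset.sum_neg_distrib]
        _ ≤ Ry.card • (2:ℝ) := this
        _ = 2 * (Ry.card : ℝ) := by simp [mul_comm]
    rw [hEdiff, hsplitx, hsplity]
    have hSΔ1 := (abs_le.mp hSΔb).1
    have hSΔ2 := (abs_le.mp hSΔb).2
    have hSa2 := (abs_le.mp hSa).2
    have hSb1 := (abs_le.mp hSb).1
    have hSb2 := (abs_le.mp hSb).2
    have hK0 : 0 ≤ K := Nat.cast_nonneg _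
    have hp0 : (0:ℝ) < dxR⁻¹ := inv_pos.mpr hdx0
    have hq0 : (0:ℝ) < dyR⁻¹ := inv_pos.mpr hdy0
    have hxp1 : dxR * dxR⁻¹ = 1 := mul_inv_cancel₀ (ne_of_gt hdx0)
    have hyq1 : dyR * dyR⁻¹ = 1 := mul_inv_cancel₀ (ne_of_gt hdy0)
    rcases le_total dxR dyR with hc | hc
    · rw [max_eq_right hc, div_eq_mul_inv, div_eq_mul_inv, div_eq_mul_inv]
      have hqp : dyR⁻¹ ≤ dxR⁻¹ := by
        apply inv_anti₀ hdx0 hc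
      have hpq0 : 0 ≤ dxR⁻¹ - dyR⁻¹ := by linarith
      have h1 : SΔ * (dxR⁻¹ - dyR⁻¹) ≤ ΔR * (dxR⁻¹ - dyR⁻¹) :=
        mul_le_mul_of_nonneg_right hSΔ2 hpq0
      have h2 : (Sa - Sb) * dyR⁻¹ ≤ K * dyR⁻¹ :=
        mul_le_mul_of_nonneg_right hSab (le_of_lt hq0)
      have h3 : Sa * (dxR⁻¹ - dyR⁻¹) ≤ K * (dxR⁻¹ - dyR⁻¹) :=
        mul_le_mul_of_nonneg_right hSa2 hpq0
      have h4 : SRx * dxR⁻¹ ≤ (dxR - ΔR - K) * dxR⁻¹ :=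
        mul_le_mul_of_nonneg_right hSRxb (le_of_lt hp0)
      have h5 : (-SRy) * dyR⁻¹ ≤ (2 * (dyR - ΔR - K)) * dyR⁻¹ :=
        mul_le_mul_of_nonneg_right hSRyb (le_of_lt hq0)
      linarith [h1, h2, h3, h4, h5, hxp1, hyq1]
    · rw [max_eq_left hc, div_eq_mul_inv, div_eq_mul_inv, div_eq_mul_inv]
      have hpq : dxR⁻¹ ≤ dyR⁻¹ := by
        apply inv_anti₀ hdy0 hc
      have hqp0 : 0 ≤ dyR⁻¹ - dxR⁻¹ := by linarith
      have h1 : (-SΔ) * (dyR⁻¹ - dxR⁻¹) ≤ ΔR * (dyR⁻¹ - dxR⁻¹) :=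
        mul_le_mul_of_nonneg_right (by linarith) hqp0
      have h2 : (Sa - Sb) * dxR⁻¹ ≤ K * dxR⁻¹ :=
        mul_le_mul_of_nonneg_right hSab (le_of_lt hp0)
      have h3 : (-Sb) * (dyR⁻¹ - dxR⁻¹) ≤ (2 * K) * (dyR⁻¹ - dxR⁻¹) :=
        mul_le_mul_of_nonneg_right (by linarith) hqp0
      have h4 : SRx * dxR⁻¹ ≤ (dxR - ΔR - K) * dxR⁻¹ :=
        mul_le_mul_of_nonneg_right hSRxb (le_of_lt hp0)
      have h5 : (-SRy) * dyR⁻¹ ≤ (2 * (dyR - ΔR - K)) * dyR⁻¹ :=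
        mul_le_mul_of_nonneg_right hSRyb (le_of_lt hq0)
      have h6 : ΔR * dxR⁻¹ ≤ ΔR * dyR⁻¹ := mul_le_mul_of_nonneg_left hpq hΔR0
      linarith [h1, h2, h3, h4, h5, h6, hxp1, hyq1]
  -- supremum bound
  have hS0 : (0:ℝ) ∈ {t : ℝ | ∃ f : V → ℝ, Lip G f ∧ t = Ef G x f - Ef G y f} := by
    refine ⟨fun _ => 0, fun u v => by simp, ?_⟩
    simp [Ef]
  have hsup : sSup {t : ℝ | ∃ f : V → ℝ, Lip G f ∧ t = Ef G x f - Ef G y f}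
      ≤ 3 - (3 * ΔR + 2 * K) / max dxR dyR := by
    refine csSup_le ⟨0, hS0⟩ ?_
    rintro t ⟨f, hf, rfl⟩
    exact key f hf
  have main : kappa G x y ≥
      ((G.neighborSet x ∩ G.neighborSet y).ncard : ℝ) / (max (deg G x) (deg G y) : ℝ)
        - 2 * (1 - ((k : ℝ) + ((G.neighborSet x ∩ G.neighborSet y).ncard : ℝ)) /
            (max (deg G x) (deg G y) : ℝ)) := by
    rw [kappa, ge_iff_le, hΔcard, hdx, hdy]
    have heq : (Δs.card : ℝ) / max (Nx.card : ℝ) (Ny.card : ℝ)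
        - 2 * (1 - ((k:ℝ) + (Δs.card : ℝ)) / max (Nx.card : ℝ) (Ny.card : ℝ))
        = 1 - (3 - (3 * ΔR + 2 * K) / max dxR dyR) := by
      rw [hΔRdef, hKdef, hdxRdef, hdyRdef]
      ring
    rw [heq]
    linarith [hsup]
  refine ⟨main, ?_⟩
  intro hk
  have hfinQx : (G.neighborSet x \ (G.neighborSet x ∩ G.neighborSet y)).Finite :=
    (hlf x).diff
  have hfinQy : (G.neighborSet y \ (G.neighborSet x ∩ G.neighborSet y)).Finite :=
    (hlf y).diff
  have hΔlex : Δs.card ≤ Nx.card := Finset.card_le_card Finset.inter_subset_left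
  have hΔley : Δs.card ≤ Ny.card := Finset.card_le_card
    (by rw [hΔdef]; exact Finset.inter_subset_right)
  have hQxcard : (G.neighborSet x \ (G.neighborSet x ∩ G.neighborSet y)).ncard
      = Nx.card - Δs.card := by
    rw [Set.ncard_eq_toFinset_card _ hfinQx]
    rw [show hfinQx.toFinset = Nx \ Δs from Finset.ext fun z => by
      simp only [Set.Finite.mem_toFinset, Set.mem_diff, Finset.mem_sdiff, hmemΔ z,
        hmemx z, mem_neighborSet]]
    exact Finset.card_sdiff_of_subset Finset.inter_subset_left
  have hQycard : (G.neighborSet y \ (G.neighborSet x ∩ G.neighborSet y)).ncard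
      = Ny.card - Δs.card := by
    rw [Set.ncard_eq_toFinset_card _ hfinQy]
    rw [show hfinQy.toFinset = Ny \ Δs from Finset.ext fun z => by
      simp only [Set.Finite.mem_toFinset, Set.mem_diff, Finset.mem_sdiff, hmemΔ z,
        hmemy z, mem_neighborSet]]
    refine Finset.card_sdiff_of_subset ?_
    rw [hΔdef]; exact Finset.inter_subset_right
  rw [hQxcard, hQycard] at hk
  have hkmin : min (deg G x) (deg G y) = k + Δs.card := by
    rw [hdx, hdy]
    omega
  have hcast : min ((deg G x : ℝ)) ((deg G y : ℝ))
      = (k:ℝ) + ((G.neighborSet x ∩ G.neighborSet y).ncard : ℝ) := by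
    rw [← Nat.cast_min, hkmin, hΔcard]
    push_cast
    ring
  rw [hcast]
  exact main
end

section
/- Let G be a locally finite connected simple graph and (x,y) an edge of G with deg(x) = deg(y) = d. Let Δ_G(x,y) = N(x) ∩ N(y), Q(x) = N(x) \ Δ_G(x,y), and Q(y) = N(y) \ Δ_G(x,y). Then κ(x,y) = |Δ_G(x,y)|/d if and only if there exists a perfect matching between Q(x) and Q(y), i.e., a set of |Q(x)| = |Q(y)| = d − |Δ_G(x,y)| pairwise disjoint edges of G each joining a vertex of Q(x) to a distinct vertex of Q(y). -/
open SimpleGraph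

/-- A perfect matching in `G` between two disjoint vertex sets `A` and `B`: a bijection
`A → B` matching each vertex of `A` to a distinct adjacent vertex of `B` (i.e., a set of
pairwise disjoint edges of `G` covering all of `A ∪ B`). -/
def PerfectMatchingBetween {V : Type*} (G : SimpleGraph V) (A B : Set V) : Prop :=
  ∃ f : V → V, Set.BijOn f A B ∧ ∀ a ∈ A, G.Adj a (f a)

private lemma Ef_eq_sum {V : Type*} (G : SimpleGraph V) (v : V)
    (hv : (G.neighborSet v).Finite) (f : V → ℝ) :
    Ef G v f = (∑ z ∈ hv.toFinset, f z) / (deg G v : ℝ) := by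
  unfold Ef
  rw [← finsum_mem_coe_finset, hv.coe_toFinset]

private lemma one_le_dist' {V : Type*} {G : SimpleGraph V} (hG : G.Connected) {a b : V}
    (hne : a ≠ b) : (1 : ℝ) ≤ (G.dist a b : ℝ) := by
  exact_mod_cast hG.pos_dist_of_ne hne

private lemma two_le_dist' {V : Type*} {G : SimpleGraph V} (hG : G.Connected) {a b : V}
    (hne : a ≠ b) (hnadj : ¬ G.Adj a b) : (2 : ℝ) ≤ (G.dist a b : ℝ) := by
  have h0 : 0 < G.dist a b := hG.pos_dist_of_ne hne
  have h1 : G.dist a b ≠ 1 := fun h => hnadj (dist_eq_one_iff_adj.mp h)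
  exact_mod_cast by omega

private lemma dist_eq_one_of_adj' {V : Type*} {G : SimpleGraph V} {a b : V}
    (h : G.Adj a b) : (G.dist a b : ℝ) = 1 := by
  exact_mod_cast dist_eq_one_iff_adj.mpr h

/-- For an edge `(x,y)` with `deg x = deg y = d`, the Ricci curvature equals
`|Δ_G(x,y)|/d` if and only if there is a perfect matching between
`Q(x) = N(x) \ Δ_G(x,y)` and `Q(y) = N(y) \ Δ_G(x,y)`. -/
theorem kappa_eq_triangle_iff_perfect_matching {V : Type*} (G : SimpleGraph V)
    (hlf : ∀ v : V, (G.neighborSet v).Finite) (hG : G.Connected)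
    (x y : V) (hxy : G.Adj x y) (d : ℕ)
    (hdx : deg G x = d) (hdy : deg G y = d) :
    kappa G x y = ((G.neighborSet x ∩ G.neighborSet y).ncard : ℝ) / (d : ℝ) ↔
      PerfectMatchingBetween G
        (G.neighborSet x \ (G.neighborSet x ∩ G.neighborSet y))
        (G.neighborSet y \ (G.neighborSet x ∩ G.neighborSet y)) := by
  classical
  set sx := (hlf x).toFinset with hsx
  set sy := (hlf y).toFinset with hsy
  set tD := sx ∩ sy with htD
  set tQx := sx \ tD with htQx
  set tQy := sy \ tD with htQy
  have hmemx : ∀ z, z ∈ sx ↔ G.Adj x z := fun z => by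
    rw [hsx, Set.Finite.mem_toFinset, mem_neighborSet]
  have hmemy : ∀ z, z ∈ sy ↔ G.Adj y z := fun z => by
    rw [hsy, Set.Finite.mem_toFinset, mem_neighborSet]
  have hsxc : (sx : Set V) = G.neighborSet x := (hlf x).coe_toFinset
  have hsyc : (sy : Set V) = G.neighborSet y := (hlf y).coe_toFinset
  have hsxcard : sx.card = d := by
    rw [← hdx]; exact (Set.ncard_eq_toFinset_card _ (hlf x)).symm
  have hsycard : sy.card = d := by
    rw [← hdy]; exact (Set.ncard_eq_toFinset_card _ (hlf y)).symm
  have hDx : tD ⊆ sx := Finset.inter_subset_left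
  have hDy : tD ⊆ sy := Finset.inter_subset_right
  set δ := tD.card with hδ
  have hδd : δ ≤ d := hsxcard ▸ Finset.card_le_card hDx
  have hQxcard : tQx.card = d - δ := by rw [htQx, Finset.card_sdiff_of_subset hDx, hsxcard]
  have hQycard : tQy.card = d - δ := by rw [htQy, Finset.card_sdiff_of_subset hDy, hsycard]
  have hDset : (G.neighborSet x ∩ G.neighborSet y) = (tD : Set V) := by
    rw [htD, Finset.coe_inter, hsxc, hsyc]
  have hncardΔ : (G.neighborSet x ∩ G.neighborSet y).ncard = δ := by
    rw [hDset, Set.ncard_coe_finset]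
  have hQxset : (tQx : Set V) =
      G.neighborSet x \ (G.neighborSet x ∩ G.neighborSet y) := by
    rw [htQx, Finset.coe_sdiff, hsxc, hDset]
  have hQyset : (tQy : Set V) =
      G.neighborSet y \ (G.neighborSet x ∩ G.neighborSet y) := by
    rw [htQy, Finset.coe_sdiff, hsyc, hDset]
  have hysx : y ∈ sx := (hmemx y).mpr hxy
  have hd0 : 0 < d := hsxcard ▸ Finset.card_pos.mpr ⟨y, hysx⟩
  have hd0r : (0 : ℝ) < d := by exact_mod_cast hd0
  have hxQy : x ∈ tQy := by
    rw [htQy, Finset.mem_sdiff]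
    refine ⟨(hmemy x).mpr hxy.symm, fun hx => ?_⟩
    exact G.irrefl ((hmemx x).mp (hDx hx))
  set S : Set ℝ := {t : ℝ | ∃ f : V → ℝ, Lip G f ∧ t = Ef G x f - Ef G y f} with hSdef
  have hkappa : kappa G x y = 1 - sSup S := rfl
  have hEf : ∀ f : V → ℝ,
      Ef G x f - Ef G y f = ((∑ z ∈ sx, f z) - ∑ z ∈ sy, f z) / d := by
    intro f
    rw [Ef_eq_sum G x (hlf x) f, Ef_eq_sum G y (hlf y) f, hdx, hdy, ← hsx, ← hsy]
    ring
  have hSne : S.Nonempty := by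
    refine ⟨_, fun _ => (0 : ℝ), fun a b => by simp, rfl⟩
  have habs : ∀ (f : V → ℝ) (a b : V), Lip G f → G.Adj a b → f a - f b ≤ 1 := by
    intro f a b hf hab
    have h := hf a b
    rw [dist_eq_one_of_adj' hab] at h
    linarith [(abs_le.mp h).2]
  have hSbdd : BddAbove S := by
    refine ⟨3, ?_⟩
    rintro t ⟨f, hf, rfl⟩
    rw [hEf f]
    have hx1 : ∀ z ∈ sx, f z ≤ f x + 1 := by
      intro z hz
      have := habs f z x hf ((hmemx z).mp hz).symm
      linarith
    have hy1 : ∀ z ∈ sy, f y - 1 ≤ f z := by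
      intro z hz
      have := habs f y z hf ((hmemy z).mp hz)
      linarith
    have hsum1 : (∑ z ∈ sx, f z) ≤ d * (f x + 1) := by
      have := Finset.sum_le_card_nsmul sx f (f x + 1) hx1
      rwa [nsmul_eq_mul, hsxcard] at this
    have hsum2 : (d : ℝ) * (f y - 1) ≤ ∑ z ∈ sy, f z := by
      have := Finset.card_nsmul_le_sum sy f (f y - 1) hy1
      rwa [nsmul_eq_mul, hsycard] at this
    have hfxy : f x - f y ≤ 1 := habs f x y hf hxy
    rw [div_le_iff₀ hd0r]
    nlinarith
  -- the indicator witness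
  set g : V → ℝ := fun v => if v ∈ tQx then 1 else 0 with hg
  have hgLip : Lip G g := by
    intro a b
    rcases eq_or_ne a b with rfl | hne
    · simp
    · have h1 := one_le_dist' hG hne
      have : |g a - g b| ≤ 1 := by
        rw [hg]; dsimp only; split_ifs <;> simp
      linarith
  have hgx : (∑ z ∈ sx, g z) = ((d - δ : ℕ) : ℝ) := by
    rw [hg]; dsimp only
    rw [Finset.sum_ite_mem, Finset.inter_eq_right.mpr (htQx ▸ Finset.sdiff_subset),
      Finset.sum_const, hQxcard, nsmul_eq_mul, mul_one]
  have hgy : (∑ z ∈ sy, g z) = 0 := by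
    refine Finset.sum_eq_zero fun z hz => ?_
    rw [hg]; dsimp only
    rw [if_neg]
    rw [htQx, Finset.mem_sdiff, htD, Finset.mem_inter]
    rintro ⟨hzx, hzD⟩
    exact hzD ⟨hzx, hz⟩
  have hgS : ((d - δ : ℕ) : ℝ) / d ∈ S := by
    refine ⟨g, hgLip, ?_⟩
    rw [hEf g, hgx, hgy]; ring
  have hcast : ((d - δ : ℕ) : ℝ) = (d : ℝ) - (δ : ℝ) := by
    rw [Nat.cast_sub hδd]
  constructor
  · -- equality implies matching
    intro hk
    rw [hncardΔ] at hk
    have hsup : sSup S = ((d : ℝ) - δ) / d := by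
      rw [hkappa] at hk
      have h2 : sSup S = 1 - (δ : ℝ) / d := by linarith
      rw [h2]
      field_simp
    by_contra hnm
    -- bipartite neighbourhood function for Hall's theorem
    set tmap : {a // a ∈ tQx} → Finset V :=
      fun a => tQy.filter (fun w => G.Adj a.1 w) with htmap
    have hhall : ¬ (∀ s : Finset {a // a ∈ tQx}, s.card ≤ (s.biUnion tmap).card) := by
      intro hcon
      obtain ⟨m0, hm0inj, hm0mem⟩ :=
        (Finset.all_card_le_biUnion_card_iff_exists_injective tmap).mp hcon
      apply hnm
      rw [← hQxset, ← hQyset]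
      set M : V → V := fun v => if h : v ∈ tQx then m0 ⟨v, h⟩ else v with hM
      have hMQ : ∀ (a : V) (h : a ∈ tQx), M a ∈ tQy ∧ G.Adj a (M a) := by
        intro a h
        have hm := hm0mem ⟨a, h⟩
        rw [htmap] at hm
        simp only [Finset.mem_filter] at hm
        rw [hM]; dsimp only
        rw [dif_pos h]
        exact hm
      have hinj : Set.InjOn M (tQx : Set V) := by
        intro a ha b hb heq
        have ha' : a ∈ tQx := ha
        have hb' : b ∈ tQx := hb
        rw [hM] at heq; dsimp only at heq
        rw [dif_pos ha', dif_pos hb'] at heq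
        have := hm0inj heq
        exact congrArg Subtype.val this
      refine ⟨M, ⟨?_, hinj, ?_⟩, ?_⟩
      · intro a ha
        exact Finset.mem_coe.mpr (hMQ a ha).1
      · -- SurjOn via cardinality
        have himg : tQx.image M ⊆ tQy := by
          intro w hw
          obtain ⟨a, ha, rfl⟩ := Finset.mem_image.mp hw
          exact (hMQ a ha).1
        have hcardimg : (tQx.image M).card = tQy.card := by
          rw [Finset.card_image_of_injOn hinj, hQxcard, hQycard]
        have himgeq : tQx.image M = tQy :=
          Finset.eq_of_subset_of_card_le himg (le_of_eq hcardimg.symm)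
        intro b hb
        have : b ∈ tQx.image M := himgeq ▸ (Finset.mem_coe.mp hb)
        obtain ⟨a, ha, rfl⟩ := Finset.mem_image.mp this
        exact ⟨a, Finset.mem_coe.mpr ha, rfl⟩
      · intro a ha
        exact (hMQ a (Finset.mem_coe.mp ha)).2
    push_neg at hhall
    obtain ⟨s, hs⟩ := hhall
    set A := s.image Subtype.val with hA
    set B := s.biUnion tmap with hB
    have hAsub : A ⊆ tQx := by
      intro a ha
      obtain ⟨a', _, rfl⟩ := Finset.mem_image.mp ha
      exact a'.2
    have hAcard : A.card = s.card := Finset.card_image_of_injective _ Subtype.val_injective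
    have hBA : B.card < A.card := by rw [hAcard]; exact hs
    have hBsub : B ⊆ tQy := Finset.biUnion_subset.mpr fun a _ => Finset.filter_subset _ _
    have hAne : A.Nonempty := Finset.card_pos.mp (lt_of_le_of_lt (Nat.zero_le _) hBA)
    have hBmem : ∀ w, w ∈ tQy → (∃ a ∈ A, G.Adj a w) → w ∈ B := by
      rintro w hw ⟨a, haA, hadj⟩
      obtain ⟨a', hs', rfl⟩ := Finset.mem_image.mp haA
      refine Finset.mem_biUnion.mpr ⟨a', hs', ?_⟩
      rw [htmap]
      exact Finset.mem_filter.mpr ⟨hw, hadj⟩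
    have hAsx : A ⊆ sx := hAsub.trans (htQx ▸ Finset.sdiff_subset)
    have hAd : A.card ≤ d := hsxcard ▸ Finset.card_le_card hAsx
    -- the bump witness
    set fA : V → ℝ := fun v =>
      if v ∈ A then 2
      else if (v = x ∨ v ∈ sx ∨ ∃ a ∈ A, G.Adj a v) then 1 else 0 with hfA
    have hval : ∀ v, fA v = 0 ∨ fA v = 1 ∨ fA v = 2 := by
      intro v; rw [hfA]; dsimp only; split_ifs <;> norm_num
    have h20 : ∀ u w, fA u = 2 → fA w = 0 → ¬ G.Adj u w := by
      intro u w h2 h0 hadjuw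
      have hu : u ∈ A := by
        by_contra h
        rw [hfA] at h2; dsimp only at h2; rw [if_neg h] at h2
        split_ifs at h2 <;> norm_num at h2
      rw [hfA] at h0; dsimp only at h0
      split_ifs at h0 with hwA hcond
      · norm_num at h0
      · norm_num at h0
      · exact hcond (Or.inr (Or.inr ⟨u, hu, hadjuw⟩))
    have hfALip : Lip G fA := by
      intro a b
      rcases eq_or_ne a b with rfl | hne
      · simp
      · have h1 := one_le_dist' hG hne
        have hd2 : (0:ℝ) ≤ (G.dist a b : ℝ) := by positivity
        rcases hval a with ha | ha | ha
        · rcases hval b with hb | hb | hb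
          · rw [ha, hb]; norm_num
          · rw [ha, hb]; norm_num; exact_mod_cast h1
          · rw [ha, hb]
            have hnadj : ¬ G.Adj a b := fun h => h20 b a hb ha h.symm
            have h2d := two_le_dist' hG hne hnadj
            norm_num; exact_mod_cast h2d
        · rcases hval b with hb | hb | hb
          · rw [ha, hb]; norm_num; exact_mod_cast h1
          · rw [ha, hb]; norm_num
          · rw [ha, hb]; norm_num; exact_mod_cast h1
        · rcases hval b with hb | hb | hb
          · rw [ha, hb]
            have hnadj := h20 a b ha hb
            have h2d := two_le_dist' hG hne hnadj
            norm_num; exact_mod_cast h2d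
          · rw [ha, hb]; norm_num; exact_mod_cast h1
          · rw [ha, hb]; norm_num
    have hfAx : (∑ z ∈ sx, fA z) = (d : ℝ) + A.card := by
      rw [← Finset.sum_sdiff hAsx]
      have h2 : (∑ a ∈ A, fA a) = 2 * A.card := by
        have hc : ∀ a ∈ A, fA a = 2 := fun a ha => by
          rw [hfA]; dsimp only; rw [if_pos ha]
        rw [Finset.sum_congr rfl hc, Finset.sum_const, nsmul_eq_mul]
        ring
      have h1 : (∑ z ∈ sx \ A, fA z) = ((sx \ A).card : ℝ) := by
        have hc : ∀ z ∈ sx \ A, fA z = 1 := by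
          intro z hz
          rw [Finset.mem_sdiff] at hz
          rw [hfA]; dsimp only
          rw [if_neg hz.2, if_pos (Or.inr (Or.inl hz.1))]
        rw [Finset.sum_congr rfl hc, Finset.sum_const, nsmul_eq_mul, mul_one]
      rw [h1, h2, Finset.card_sdiff_of_subset hAsx, hsxcard]
      rw [Nat.cast_sub hAd]
      ring
    have hfAy : (∑ z ∈ sy, fA z) ≤ (δ : ℝ) + B.card := by
      have bound : ∀ z ∈ sy, fA z ≤ (if z ∈ tD ∪ B then (1:ℝ) else 0) := by
        intro z hz
        have hzA : z ∉ A := by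
          intro h
          have := hAsub h
          rw [htQx, Finset.mem_sdiff] at this
          exact this.2 (htD ▸ Finset.mem_inter.mpr ⟨this.1, hz⟩)
        rw [hfA]; dsimp only
        rw [if_neg hzA]
        split_ifs with hcond hmem hmem
        · exact le_rfl
        · exfalso
          apply hmem
          rcases hcond with rfl | hzx | ⟨a, haA, hadj⟩
          · obtain ⟨a, haA⟩ := hAne
            have haQx := hAsub haA
            have : G.Adj a z := ((hmemx a).mp (hAsx haA)).symm
            exact Finset.mem_union_right _ (hBmem z hxQy ⟨a, haA, this⟩)
          · exact Finset.mem_union_left _ (htD ▸ Finset.mem_inter.mpr ⟨hzx, hz⟩)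
          · by_cases hzsx : z ∈ sx
            · exact Finset.mem_union_left _ (htD ▸ Finset.mem_inter.mpr ⟨hzsx, hz⟩)
            · have hzQy : z ∈ tQy := by
                rw [htQy, Finset.mem_sdiff]
                exact ⟨hz, fun h => hzsx (hDx h)⟩
              exact Finset.mem_union_right _ (hBmem z hzQy ⟨a, haA, hadj⟩)
        · norm_num
        · exact le_rfl
      calc (∑ z ∈ sy, fA z) ≤ ∑ z ∈ sy, (if z ∈ tD ∪ B then (1:ℝ) else 0) :=
            Finset.sum_le_sum bound
        _ = ((sy ∩ (tD ∪ B)).card : ℝ) := by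
            rw [Finset.sum_ite_mem, Finset.sum_const, nsmul_eq_mul, mul_one]
        _ ≤ (((tD ∪ B).card : ℕ) : ℝ) := by
            exact_mod_cast Finset.card_le_card Finset.inter_subset_right
        _ ≤ (δ : ℝ) + B.card := by
            exact_mod_cast Finset.card_union_le tD B
    -- contradiction
    have htS : Ef G x fA - Ef G y fA ∈ S := ⟨fA, hfALip, rfl⟩
    have hle := le_csSup hSbdd htS
    rw [hsup, hEf fA] at hle
    have hBA' : (B.card : ℝ) + 1 ≤ A.card := by exact_mod_cast hBA
    have hnum : (d : ℝ) - δ + 1 ≤ (∑ z ∈ sx, fA z) - ∑ z ∈ sy, fA z := by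
      rw [hfAx]; linarith
    have := (div_le_div_iff_of_pos_right hd0r).mpr hnum
    have hfinal := this.trans hle
    rw [div_le_div_iff_of_pos_right hd0r] at hfinal
    linarith
  · -- matching implies equality
    rintro ⟨m, hbij, hadj⟩
    rw [← hQxset] at hadj
    rw [← hQxset, ← hQyset] at hbij
    have ub : ∀ t ∈ S, t ≤ ((d - δ : ℕ) : ℝ) / d := by
      rintro t ⟨f, hf, rfl⟩
      rw [hEf f]
      have e3 : (∑ a ∈ tQx, f (m a)) = ∑ z ∈ tQy, f z := by
        refine Finset.sum_bij (fun a _ => m a) ?_ ?_ ?_ ?_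
        · intro a ha
          exact Finset.mem_coe.mp (hbij.mapsTo (Finset.mem_coe.mpr ha))
        · intro a ha b hb heq
          exact hbij.injOn (Finset.mem_coe.mpr ha) (Finset.mem_coe.mpr hb) heq
        · intro b hb
          obtain ⟨a, ha, rfl⟩ := hbij.surjOn (Finset.mem_coe.mpr hb)
          exact ⟨a, Finset.mem_coe.mp ha, rfl⟩
        · intro a _; rfl
      have hsplit : (∑ z ∈ sx, f z) - ∑ z ∈ sy, f z
          = ∑ a ∈ tQx, (f a - f (m a)) := by
        have e1 : (∑ z ∈ tQy, f z) + ∑ z ∈ tD, f z = ∑ z ∈ sy, f z :=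
          Finset.sum_sdiff hDy
        have e2 : (∑ z ∈ tQx, f z) + ∑ z ∈ tD, f z = ∑ z ∈ sx, f z :=
          Finset.sum_sdiff hDx
        rw [Finset.sum_sub_distrib, e3]
        linarith
      rw [hsplit]
      have hbound : (∑ a ∈ tQx, (f a - f (m a))) ≤ (tQx.card : ℝ) * 1 := by
        have := Finset.sum_le_card_nsmul tQx (fun a => f a - f (m a)) 1 ?_
        · rwa [nsmul_eq_mul] at this
        · intro a ha
          exact habs f a (m a) hf (hadj a (Finset.mem_coe.mpr ha))
      rw [hQxcard] at hbound
      rw [div_le_div_iff_of_pos_right hd0r]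
      linarith
    have hsupeq : sSup S = ((d - δ : ℕ) : ℝ) / d :=
      le_antisymm (csSup_le hSne ub) (le_csSup hSbdd hgS)
    rw [hkappa, hncardΔ, hsupeq, hcast]
    field_simp
    ring
end

section
/- Let G be a connected locally finite simple graph of girth 4 (i.e., triangle-free and containing a 4-cycle), and let (x,y) be an edge with deg(x) = deg(y) = d. Then κ(x,y) = 0 if and only if there exists a perfect matching between N(x) and N(y), i.e., a set of d pairwise disjoint edges of G each joining a vertex of N(x) to a distinct vertex of N(y). -/
open SimpleGraph

lemma triangle_free_of_egirth_four {V : Type*} {G : SimpleGraph V} (h : G.egirth = 4)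
    {a b c : V} (hab : G.Adj a b) (hbc : G.Adj b c) (hca : G.Adj c a) : False := by
  have h4 : (4 : ℕ∞) ≤ G.egirth := le_of_eq h.symm
  rw [SimpleGraph.le_egirth] at h4
  have hc : (Walk.cons hab (Walk.cons hbc (Walk.cons hca Walk.nil))).IsCycle := by
    rw [Walk.cons_isCycle_iff]
    constructor
    · simp [Walk.cons_isPath_iff, hab.ne, hbc.ne, hca.ne, hab.ne', hbc.ne', hca.ne',
        (hca.symm.ne : a ≠ c)]
    · simp [Sym2.eq_iff, hab.ne, hbc.ne, hca.ne, hab.ne', hca.ne']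
  have h5 := h4 a _ hc
  simp only [Walk.length_cons, Walk.length_nil] at h5
  norm_num at h5

lemma mcshane {V : Type*} {G : SimpleGraph V} (hG : G.Connected)
    (K : Finset V) (hK : K.Nonempty) (f₀ : V → ℝ)
    (h : ∀ a ∈ K, ∀ b ∈ K, f₀ a - f₀ b ≤ (G.dist a b : ℝ)) :
    ∃ F : V → ℝ, Lip G F ∧ ∀ a ∈ K, F a = f₀ a := by
  refine ⟨fun v => K.inf' hK (fun s => f₀ s + (G.dist v s : ℝ)), ?_, ?_⟩
  · have key : ∀ a b : V, (K.inf' hK fun s => f₀ s + (G.dist a s : ℝ))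
        - (K.inf' hK fun s => f₀ s + (G.dist b s : ℝ)) ≤ (G.dist a b : ℝ) := by
      intro a b
      obtain ⟨s, hs, hFb⟩ := Finset.exists_mem_eq_inf' hK (fun s => f₀ s + (G.dist b s : ℝ))
      rw [hFb]
      have h1 : (K.inf' hK fun t => f₀ t + (G.dist a t : ℝ)) ≤ f₀ s + (G.dist a s : ℝ) :=
        Finset.inf'_le _ hs
      have h2 : (G.dist a s : ℝ) ≤ (G.dist a b : ℝ) + (G.dist b s : ℝ) := by
        exact_mod_cast hG.dist_triangle
      linarith
    intro a b
    rw [abs_sub_le_iff]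
    refine ⟨key a b, ?_⟩
    have := key b a
    rwa [SimpleGraph.dist_comm] at this
  · intro a ha
    refine le_antisymm ?_ ?_
    · have := Finset.inf'_le (fun s => f₀ s + (G.dist a s : ℝ)) ha
      simp only [SimpleGraph.dist_self, Nat.cast_zero, add_zero] at this
      exact this
    · refine Finset.le_inf' _ _ fun s hs => ?_
      have := h a ha s hs
      linarith

/-- **Ricci-flat edges of regular girth-4 graphs.** In a connected locally finite graph
of girth 4, an edge `(x,y)` with `deg x = deg y = d` has `κ(x,y) = 0` iff there is a
perfect matching between `N(x)` and `N(y)` (a set of `d` pairwise disjoint edges of `G`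
each joining a vertex of `N(x)` to a distinct vertex of `N(y)`). -/
theorem kappa_zero_iff_perfect_matching_girth_four {V : Type*} (G : SimpleGraph V)
    (hlf : ∀ v : V, (G.neighborSet v).Finite) (hG : G.Connected)
    (hgirth : G.egirth = 4)
    (x y : V) (hxy : G.Adj x y) (d : ℕ)
    (hdx : deg G x = d) (hdy : deg G y = d) :
    kappa G x y = 0 ↔
      PerfectMatchingBetween G (G.neighborSet x) (G.neighborSet y) := by
  classical
  set Nx : Finset V := (hlf x).toFinset with hNxdef
  set Ny : Finset V := (hlf y).toFinset with hNydef
  have hmemx : ∀ v, v ∈ Nx ↔ G.Adj x v := fun v => by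
    simp [hNxdef, Set.Finite.mem_toFinset]
  have hmemy : ∀ v, v ∈ Ny ↔ G.Adj y v := fun v => by
    simp [hNydef, Set.Finite.mem_toFinset]
  have hcoex : (Nx : Set V) = G.neighborSet x := (hlf x).coe_toFinset
  have hcoey : (Ny : Set V) = G.neighborSet y := (hlf y).coe_toFinset
  have hcardx : Nx.card = d := by
    rw [← hdx, deg, Set.ncard_eq_toFinset_card _ (hlf x)]
  have hcardy : Ny.card = d := by
    rw [← hdy, deg, Set.ncard_eq_toFinset_card _ (hlf y)]
  have hdpos : 0 < d := by
    rw [← hcardx]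
    exact Finset.card_pos.mpr ⟨y, (hmemx y).mpr hxy⟩
  have hdR : (0 : ℝ) < d := by exact_mod_cast hdpos
  have hdisj : ∀ v, v ∈ Nx → v ∈ Ny → False := fun v h1 h2 =>
    triangle_free_of_egirth_four hgirth ((hmemx v).mp h1) (((hmemy v).mp h2)).symm hxy.symm
  have hEfx : ∀ f : V → ℝ, Ef G x f = (∑ z ∈ Nx, f z) / d := by
    intro f
    rw [Ef, finsum_mem_eq_finite_toFinset_sum f (hlf x), hdx]
  have hEfy : ∀ f : V → ℝ, Ef G y f = (∑ z ∈ Ny, f z) / d := by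
    intro f
    rw [Ef, finsum_mem_eq_finite_toFinset_sum f (hlf y), hdy]
  set SS : Set ℝ := {t : ℝ | ∃ f : V → ℝ, Lip G f ∧ t = Ef G x f - Ef G y f} with hSSdef
  have hk : kappa G x y = 1 - sSup SS := rfl
  -- distance facts
  have hdist1 : ∀ a b : V, G.Adj a b → (G.dist a b : ℝ) = 1 := fun a b h => by
    exact_mod_cast dist_eq_one_iff_adj.mpr h
  have hdistpos : ∀ a b : V, a ≠ b → (1 : ℝ) ≤ (G.dist a b : ℝ) := fun a b h => by
    exact_mod_cast hG.pos_dist_of_ne h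
  -- every element of SS is at most 3
  have hbdd3 : ∀ t ∈ SS, t ≤ 3 := by
    rintro t ⟨f, hf, rfl⟩
    have h1 : ∑ z ∈ Nx, f z ≤ d * (f x + 1) := by
      calc ∑ z ∈ Nx, f z ≤ ∑ z ∈ Nx, (f x + 1) := by
            refine Finset.sum_le_sum fun z hz => ?_
            have hzx := hf z x
            rw [SimpleGraph.dist_comm, hdist1 x z ((hmemx z).mp hz)] at hzx
            have := abs_le.mp hzx
            linarith [this.2]
        _ = d * (f x + 1) := by
            rw [Finset.sum_const, hcardx, nsmul_eq_mul]
    have h2 : d * (f y - 1) ≤ ∑ z ∈ Ny, f z := by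
      calc (d : ℝ) * (f y - 1) = ∑ z ∈ Ny, (f y - 1) := by
            rw [Finset.sum_const, hcardy, nsmul_eq_mul]
        _ ≤ ∑ z ∈ Ny, f z := by
            refine Finset.sum_le_sum fun z hz => ?_
            have hzy := hf z y
            rw [SimpleGraph.dist_comm, hdist1 y z ((hmemy z).mp hz)] at hzy
            have := abs_le.mp hzy
            linarith [this.1]
    have hfxy : f x - f y ≤ 1 := by
      have := abs_le.mp (hf x y)
      rw [hdist1 x y hxy] at this
      linarith [this.2]
    rw [hEfx, hEfy, div_sub_div_same, div_le_iff₀ hdR]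
    nlinarith
  have hBdd : BddAbove SS := ⟨3, fun t ht => hbdd3 t ht⟩
  -- 1 ∈ SS, via the function which is 1 on N(x) and 0 on N(y)
  have hone : (1 : ℝ) ∈ SS := by
    set f₀ : V → ℝ := fun v => if v ∈ Nx then 1 else 0 with hf₀def
    have hcon : ∀ a ∈ Nx ∪ Ny, ∀ b ∈ Nx ∪ Ny, f₀ a - f₀ b ≤ (G.dist a b : ℝ) := by
      intro a _ b _
      rcases eq_or_ne a b with rfl | hab
      · simp [SimpleGraph.dist_self]
      · have h1 := hdistpos a b hab
        have : f₀ a - f₀ b ≤ 1 := by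
          simp only [hf₀def]
          split_ifs <;> norm_num
        linarith
    obtain ⟨F, hFL, hFval⟩ := mcshane hG (Nx ∪ Ny) ⟨y, Finset.mem_union_left _ ((hmemx y).mpr hxy)⟩ f₀ hcon
    refine ⟨F, hFL, ?_⟩
    have hsx : ∑ z ∈ Nx, F z = d := by
      have : ∀ z ∈ Nx, F z = 1 := by
        intro z hz
        rw [hFval z (Finset.mem_union_left _ hz), hf₀def]
        simp [hz]
      rw [Finset.sum_congr rfl this, Finset.sum_const, hcardx, nsmul_eq_mul, mul_one]
    have hsy : ∑ z ∈ Ny, F z = 0 := by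
      have : ∀ z ∈ Ny, F z = 0 := by
        intro z hz
        rw [hFval z (Finset.mem_union_right _ hz), hf₀def]
        have : z ∉ Nx := fun h => hdisj z h hz
        simp [this]
      rw [Finset.sum_congr rfl this, Finset.sum_const, smul_zero]
    rw [hEfx, hEfy, hsx, hsy]
    field_simp
    ring
  constructor
  · -- κ = 0 → matching
    intro h0
    rw [hk] at h0
    have hSup : sSup SS = 1 := by linarith
    by_contra hno
    set t : ↥Nx → Finset V := fun z => Ny.filter (fun w => G.Adj ↑z w) with htdef
    by_cases hall : ∀ s : Finset ↥Nx, s.card ≤ (s.biUnion t).card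
    · -- Hall's condition holds: build a matching, contradiction
      obtain ⟨F, hFinj, hFt⟩ := (Finset.all_card_le_biUnion_card_iff_existsInjective' t).mp hall
      set m : V → V := fun v => if h : v ∈ Nx then F ⟨v, h⟩ else v with hmdef
      have hmval : ∀ v (hv : v ∈ Nx), m v = F ⟨v, hv⟩ := by
        intro v hv; simp [hmdef, hv]
      have hmadj : ∀ v (hv : v ∈ Nx), G.Adj v (m v) ∧ m v ∈ Ny := by
        intro v hv
        have := hFt ⟨v, hv⟩
        rw [htdef] at this
        simp only [Finset.mem_filter] at this
        rw [hmval v hv]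
        exact ⟨this.2, this.1⟩
      have hinj : Set.InjOn m (Nx : Set V) := by
        intro a ha b hb hab
        have ha' : a ∈ Nx := ha
        have hb' : b ∈ Nx := hb
        rw [hmval a ha', hmval b hb'] at hab
        have := hFinj hab
        exact congrArg Subtype.val this
      have himg : Nx.image m = Ny := by
        apply Finset.eq_of_subset_of_card_le
        · intro w hw
          obtain ⟨a, ha, rfl⟩ := Finset.mem_image.mp hw
          exact (hmadj a ha).2
        · rw [hcardy, Finset.card_image_of_injOn (fun a ha b hb => hinj ha hb), hcardx]
      refine hno ⟨m, ⟨?_, ?_, ?_⟩, ?_⟩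
      · intro a ha
        rw [← hcoex] at ha
        rw [← hcoey]
        exact (hmadj a ha).2
      · rw [← hcoex]; exact hinj
      · intro w hw
        rw [← hcoey, ← himg] at hw
        obtain ⟨a, ha, rfl⟩ := Finset.mem_image.mp hw
        exact ⟨a, by rw [← hcoex] at *; exact ha, rfl⟩
      · intro a ha
        rw [← hcoex] at ha
        exact (hmadj a ha).1
    · -- Hall fails: build a Lipschitz function with value > 1
      push_neg at hall
      obtain ⟨s, hs⟩ := hall
      set S : Finset V := s.image Subtype.val with hSdef
      set T : Finset V := s.biUnion t with hTdef
      have hScard : S.card = s.card := Finset.card_image_of_injective s Subtype.val_injective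
      have hSsub : S ⊆ Nx := by
        intro v hv
        obtain ⟨z, _, rfl⟩ := Finset.mem_image.mp hv
        exact z.2
      have hTsub : T ⊆ Ny := by
        intro w hw
        obtain ⟨z, _, hz⟩ := Finset.mem_biUnion.mp hw
        exact (Finset.mem_filter.mp hz).1
      have hTadj : ∀ a ∈ S, ∀ w ∈ Ny, G.Adj a w → w ∈ T := by
        intro a ha w hw hadj
        obtain ⟨z, hz, rfl⟩ := Finset.mem_image.mp ha
        exact Finset.mem_biUnion.mpr ⟨z, hz, Finset.mem_filter.mpr ⟨hw, hadj⟩⟩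
      have hcard : T.card < S.card := by rw [hScard]; exact hs
      set f₀ : V → ℝ := fun v => if v ∈ S then 2 else if v ∈ Nx ∪ T then 1 else 0 with hf₀def
      have hf₀nonneg : ∀ v, 0 ≤ f₀ v := by
        intro v; rw [hf₀def]; dsimp only; split_ifs <;> norm_num
      have hf₀le2 : ∀ v, f₀ v ≤ 2 := by
        intro v; rw [hf₀def]; dsimp only; split_ifs <;> norm_num
      have hcon : ∀ a ∈ Nx ∪ Ny, ∀ b ∈ Nx ∪ Ny, f₀ a - f₀ b ≤ (G.dist a b : ℝ) := by
        intro a ha b hb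
        rcases eq_or_ne a b with rfl | hab
        · simp [SimpleGraph.dist_self]
        have hd1 := hdistpos a b hab
        by_cases haS : a ∈ S
        · by_cases hbT : b ∈ Nx ∪ T
          · have : f₀ b = 1 ∨ f₀ b = 2 := by
              rw [hf₀def]; dsimp only
              by_cases hbS : b ∈ S
              · right; rw [if_pos hbS]
              · left; rw [if_neg hbS, if_pos hbT]
            have hfa : f₀ a = 2 := by rw [hf₀def]; simp [haS]
            rcases this with h | h <;> rw [hfa, h] <;> linarith
          · -- b ∈ Ny \ T, and a ∈ S is not adjacent to b, so dist ≥ 2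
            have hbNy : b ∈ Ny := by
              rcases Finset.mem_union.mp hb with h | h
              · exact absurd (Finset.mem_union_left _ h) hbT
              · exact h
            have hnadj : ¬ G.Adj a b := fun h =>
              hbT (Finset.mem_union_right _ (hTadj a haS b hbNy h))
            have hbS : b ∉ S := fun h => hbT (Finset.mem_union_left _ (hSsub h))
            have hfa : f₀ a = 2 := by rw [hf₀def]; simp [haS]
            have hfb : f₀ b = 0 := by rw [hf₀def]; simp [hbS, hbT]
            have hdge2 : (2 : ℝ) ≤ (G.dist a b : ℝ) := by
              have hne0 : G.dist a b ≠ 0 := Nat.pos_iff_ne_zero.mp (hG.pos_dist_of_ne hab)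
              have hne1 : G.dist a b ≠ 1 := fun h => hnadj (dist_eq_one_iff_adj.mp h)
              have : 2 ≤ G.dist a b := by omega
              exact_mod_cast this
            rw [hfa, hfb]; linarith
        · have hfa : f₀ a ≤ 1 := by
            rw [hf₀def]; dsimp only; rw [if_neg haS]
            split_ifs <;> norm_num
          have := hf₀nonneg b
          linarith
      obtain ⟨F, hFL, hFval⟩ := mcshane hG (Nx ∪ Ny)
        ⟨y, Finset.mem_union_left _ ((hmemx y).mpr hxy)⟩ f₀ hcon
      have hsx : ∑ z ∈ Nx, F z = d + S.card := by
        have h1 : ∀ z ∈ Nx, F z = 1 + (if z ∈ S then 1 else 0) := by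
          intro z hz
          rw [hFval z (Finset.mem_union_left _ hz), hf₀def]
          dsimp only
          by_cases h : z ∈ S
          · rw [if_pos h, if_pos h]; norm_num
          · rw [if_neg h, if_neg h, if_pos (Finset.mem_union_left T hz)]; norm_num
        rw [Finset.sum_congr rfl h1, Finset.sum_add_distrib, Finset.sum_const, hcardx,
          nsmul_eq_mul, mul_one, Finset.sum_ite_mem, Finset.inter_eq_right.mpr hSsub,
          Finset.sum_const, nsmul_eq_mul, mul_one]
      have hsy : ∑ z ∈ Ny, F z = T.card := by
        have h1 : ∀ z ∈ Ny, F z = (if z ∈ T then 1 else 0) := by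
          intro z hz
          rw [hFval z (Finset.mem_union_right _ hz), hf₀def]
          have hzS : z ∉ S := fun h => hdisj z (hSsub h) hz
          have hzNx : z ∉ Nx := fun h => hdisj z h hz
          dsimp only
          rw [if_neg hzS]
          by_cases hzT : z ∈ T
          · rw [if_pos (Finset.mem_union_right _ hzT), if_pos hzT]
          · rw [if_neg, if_neg hzT]
            intro h
            rcases Finset.mem_union.mp h with h | h
            · exact hzNx h
            · exact hzT h
        rw [Finset.sum_congr rfl h1, Finset.sum_ite_mem, Finset.inter_eq_right.mpr hTsub,
          Finset.sum_const, nsmul_eq_mul, mul_one]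
      have hmem : Ef G x F - Ef G y F ∈ SS := ⟨F, hFL, rfl⟩
      have hle := le_csSup hBdd hmem
      rw [hSup] at hle
      rw [hEfx, hEfy, hsx, hsy, div_sub_div_same] at hle
      have hcardR : (T.card : ℝ) + 1 ≤ (S.card : ℝ) := by exact_mod_cast hcard
      rw [div_le_one hdR] at hle
      linarith
  · -- matching → κ = 0
    rintro ⟨m, hbij, hadj⟩
    have hmapsTo : ∀ a ∈ Nx, m a ∈ Ny := by
      intro a ha
      exact (hlf y).mem_toFinset.mpr (hbij.mapsTo ((hlf x).mem_toFinset.mp ha))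
    have hinj : Set.InjOn m (Nx : Set V) := by rw [hcoex]; exact hbij.injOn
    have himg : Nx.image m = Ny := by
      apply Finset.eq_of_subset_of_card_le
      · intro w hw
        obtain ⟨a, ha, rfl⟩ := Finset.mem_image.mp hw
        exact hmapsTo a ha
      · rw [hcardy, Finset.card_image_of_injOn (fun a ha b hb => hinj ha hb), hcardx]
    have hsum_eq : ∀ f : V → ℝ, ∑ w ∈ Ny, f w = ∑ z ∈ Nx, f (m z) := by
      intro f
      rw [← himg, Finset.sum_image (fun a ha b hb h => hinj ha hb h)]
    have hub : ∀ t ∈ SS, t ≤ 1 := by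
      rintro t ⟨f, hf, rfl⟩
      rw [hEfx, hEfy, hsum_eq f, div_sub_div_same, ← Finset.sum_sub_distrib, div_le_one hdR]
      calc ∑ z ∈ Nx, (f z - f (m z)) ≤ ∑ z ∈ Nx, (1 : ℝ) := by
            refine Finset.sum_le_sum fun z hz => ?_
            have := abs_le.mp (hf z (m z))
            have hadj' : G.Adj z (m z) := hadj z ((hlf x).mem_toFinset.mp hz)
            rw [hdist1 z (m z) hadj'] at this
            linarith [this.2]
        _ = d := by rw [Finset.sum_const, hcardx, nsmul_eq_mul, mul_one]
    rw [hk]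
    have : sSup SS = 1 := le_antisymm (csSup_le ⟨1, hone⟩ hub) (le_csSup hBdd hone)
    rw [this]; ring
end

section
/- Let G be a locally finite connected simple graph and (x,y) an edge of G. Let Δ_G(x,y) = N(x) ∩ N(y), R(x) = (N(x) \ {y}) \ Δ_G(x,y), and R(y) = (N(y) \ {x}) \ Δ_G(x,y). Suppose there exist distinct vertices a_1, …, a_k ∈ R(x) and distinct vertices b_1, …, b_k ∈ R(y) with d_G(a_i, b_i) ≤ 2 for each i (a 2-matching of size k, where k ≤ min(|R(x)|, |R(y)|)). Then κ(x,y) ≥ −2 + (3|Δ_G(x,y)| + k + 2)/max(deg(x), deg(y)). Moreover, if k = min(|R(x)|, |R(y)|), then κ(x,y) ≥ −2 + (2|Δ_G(x,y)| + min(deg(x), deg(y)) + 1)/max(deg(x), deg(y)). -/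
open SimpleGraph

/-- A 2-matching of size `k` between the vertex sets `A` and `B`: `k` distinct vertices
of `A` paired with `k` distinct vertices of `B`, each pair lying at graph distance at
most 2. -/
def TwoMatchingBetween {V : Type*} (G : SimpleGraph V) (A B : Set V) (k : ℕ) : Prop :=
  ∃ a b : Fin k → V, Function.Injective a ∧ Function.Injective b ∧
    (∀ i, a i ∈ A) ∧ (∀ i, b i ∈ B) ∧ (∀ i, G.dist (a i) (b i) ≤ 2)

/-- `R(x) = (N(x) \ {y}) \ Δ_G(x,y)`, the non-common neighbours of `x`.
(So `Rside G y x` is `R(y)`.) -/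
def Rside {V : Type*} (G : SimpleGraph V) (x y : V) : Set V :=
  (G.neighborSet x \ {y}) \ (G.neighborSet x ∩ G.neighborSet y)

section Aux
variable {V : Type*} (G : SimpleGraph V)

lemma Ef_finset (x : V) (h : (G.neighborSet x).Finite) (f : V → ℝ) :
    Ef G x f = (∑ z ∈ h.toFinset, f z) / (h.toFinset.card : ℝ) := by
  rw [Ef, deg, finsum_mem_eq_finite_toFinset_sum f h, Set.ncard_eq_toFinset_card _ h]

lemma Lip_neg {f : V → ℝ} (hf : Lip G f) : Lip G (fun v => -f v) := by
  intro a b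
  have : -f a - -f b = -(f a - f b) := by ring
  rw [this, abs_neg]
  exact hf a b

lemma Ef_neg (x : V) (h : (G.neighborSet x).Finite) (f : V → ℝ) :
    Ef G x (fun v => -f v) = - Ef G x f := by
  rw [Ef_finset G x h, Ef_finset G x h, Finset.sum_neg_distrib, neg_div]

lemma kappa_symm (hlf : ∀ v : V, (G.neighborSet v).Finite) (x y : V) :
    kappa G x y = kappa G y x := by
  unfold kappa
  have : {t : ℝ | ∃ f : V → ℝ, Lip G f ∧ t = Ef G x f - Ef G y f}
      = {t : ℝ | ∃ f : V → ℝ, Lip G f ∧ t = Ef G y f - Ef G x f} := by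
    ext t
    constructor
    · rintro ⟨f, hf, rfl⟩
      exact ⟨fun v => -f v, Lip_neg G hf,
        by rw [Ef_neg G y (hlf y), Ef_neg G x (hlf x)]; ring⟩
    · rintro ⟨f, hf, rfl⟩
      exact ⟨fun v => -f v, Lip_neg G hf,
        by rw [Ef_neg G y (hlf y), Ef_neg G x (hlf x)]; ring⟩
  rw [this]

lemma deg_decomp (hlf : ∀ v : V, (G.neighborSet v).Finite) (x y : V) (hxy : G.Adj x y) :
    deg G x = 1 + (G.neighborSet x ∩ G.neighborSet y).ncard + (Rside G x y).ncard := by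
  classical
  set Dx := (hlf x).toFinset with hDx
  set Dy := (hlf y).toFinset with hDy
  set Δf := Dx ∩ Dy with hΔf
  have hyΔ : y ∉ Δf := by simp [hΔf, hDy]
  have hsub : insert y Δf ⊆ Dx := by
    intro v hv
    rcases Finset.mem_insert.1 hv with rfl | hv
    · simp [hDx, hxy]
    · exact Finset.mem_of_mem_inter_left hv
  have hRx : ((Dx \ insert y Δf : Finset V) : Set V) = Rside G x y := by
    ext v
    simp only [Finset.coe_sdiff, Set.mem_diff, Finset.mem_coe, Finset.coe_insert,
      Set.mem_insert_iff, Finset.mem_insert, hDx, hDy, hΔf, Finset.mem_inter,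
      Set.Finite.mem_toFinset, Rside, Set.mem_singleton_iff, Set.mem_inter_iff,
      SimpleGraph.mem_neighborSet]
    tauto
  have hΔ : ((Δf : Finset V) : Set V) = G.neighborSet x ∩ G.neighborSet y := by
    ext v
    simp [hΔf, hDx, hDy]
  have hcard := Finset.card_sdiff_add_card_eq_card hsub
  rw [Finset.card_insert_of_notMem hyΔ] at hcard
  have h1 : (Rside G x y).ncard = (Dx \ insert y Δf).card := by
    rw [← hRx, Set.ncard_coe_finset]
  have h2 : (G.neighborSet x ∩ G.neighborSet y).ncard = Δf.card := by
    rw [← hΔ, Set.ncard_coe_finset]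
  have h3 : deg G x = Dx.card := by
    rw [deg, ← Set.ncard_coe_finset, hDx, Set.Finite.coe_toFinset]
  omega

end Aux

lemma main_bound {V : Type*} (G : SimpleGraph V)
    (hlf : ∀ v : V, (G.neighborSet v).Finite)
    (x y : V) (hxy : G.Adj x y) (k : ℕ)
    (hk : k ≤ min (Rside G x y).ncard (Rside G y x).ncard)
    (hmatch : TwoMatchingBetween G (Rside G x y) (Rside G y x) k)
    (hd : deg G y ≤ deg G x) :
    kappa G x y ≥ -2 +
      (3 * ((G.neighborSet x ∩ G.neighborSet y).ncard : ℝ) + (k : ℝ) + 2) /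
        (deg G x : ℝ) := by
  classical
  obtain ⟨a, b, ha, hb, haR, hbR, hab⟩ := hmatch
  set Dx := (hlf x).toFinset with hDx
  set Dy := (hlf y).toFinset with hDy
  have hyDx : y ∈ Dx := by simp [hDx, hxy]
  have hxDy : x ∈ Dy := by simp [hDy, hxy.symm]
  set Δf := Dx ∩ Dy with hΔf
  have hyΔ : y ∉ Δf := by simp [hΔf, hDy]
  have hxΔ : x ∉ Δf := by simp [hΔf, hDx]
  have hsubx : insert y Δf ⊆ Dx := by
    intro v hv
    rcases Finset.mem_insert.1 hv with rfl | hv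
    · exact hyDx
    · exact Finset.mem_of_mem_inter_left hv
  have hsuby : insert x Δf ⊆ Dy := by
    intro v hv
    rcases Finset.mem_insert.1 hv with rfl | hv
    · exact hxDy
    · exact Finset.mem_of_mem_inter_right hv
  set Rxf := Dx \ insert y Δf with hRxf
  set Ryf := Dy \ insert x Δf with hRyf
  have hRx : ((Rxf : Finset V) : Set V) = Rside G x y := by
    ext v
    simp only [hRxf, Finset.coe_sdiff, Set.mem_diff, Finset.mem_coe, Finset.coe_insert,
      Set.mem_insert_iff, Finset.mem_insert, hDx, hDy, hΔf, Finset.mem_inter,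
      Set.Finite.mem_toFinset, Rside, Set.mem_singleton_iff, Set.mem_inter_iff,
      SimpleGraph.mem_neighborSet]
    tauto
  have hRy : ((Ryf : Finset V) : Set V) = Rside G y x := by
    ext v
    simp only [hRyf, Finset.coe_sdiff, Set.mem_diff, Finset.mem_coe, Finset.coe_insert,
      Set.mem_insert_iff, Finset.mem_insert, hDx, hDy, hΔf, Finset.mem_inter,
      Set.Finite.mem_toFinset, Rside, Set.mem_singleton_iff, Set.mem_inter_iff,
      SimpleGraph.mem_neighborSet]
    tauto
  have hΔ : ((Δf : Finset V) : Set V) = G.neighborSet x ∩ G.neighborSet y := by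
    ext v; simp [hΔf, hDx, hDy]
  -- cardinalities
  have hkx : k ≤ Rxf.card := by
    have := le_trans hk (min_le_left _ _)
    rwa [← hRx, Set.ncard_coe_finset] at this
  have hky : k ≤ Ryf.card := by
    have := le_trans hk (min_le_right _ _)
    rwa [← hRy, Set.ncard_coe_finset] at this
  have hcardx : Dx.card = 1 + Δf.card + Rxf.card := by
    have h := Finset.card_sdiff_add_card_eq_card hsubx
    rw [← hRxf, Finset.card_insert_of_notMem hyΔ] at h
    omega
  have hcardy : Dy.card = 1 + Δf.card + Ryf.card := by
    have h := Finset.card_sdiff_add_card_eq_card hsuby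
    rw [← hRyf, Finset.card_insert_of_notMem hxΔ] at h
    omega
  have hdegx : deg G x = Dx.card := by
    rw [deg, ← Set.ncard_coe_finset, hDx, Set.Finite.coe_toFinset]
  have hdegy : deg G y = Dy.card := by
    rw [deg, ← Set.ncard_coe_finset, hDy, Set.Finite.coe_toFinset]
  -- matched images
  set aF := Finset.image a Finset.univ with haF
  set bF := Finset.image b Finset.univ with hbF
  have haFsub : aF ⊆ Rxf := by
    intro v hv
    obtain ⟨i, _, rfl⟩ := Finset.mem_image.1 hv
    have : a i ∈ ((Rxf : Finset V) : Set V) := hRx ▸ haR i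
    exact this
  have hbFsub : bF ⊆ Ryf := by
    intro v hv
    obtain ⟨i, _, rfl⟩ := Finset.mem_image.1 hv
    have : b i ∈ ((Ryf : Finset V) : Set V) := hRy ▸ hbR i
    exact this
  have haFcard : aF.card = k := by
    rw [haF, Finset.card_image_of_injective _ ha, Finset.card_univ, Fintype.card_fin]
  have hbFcard : bF.card = k := by
    rw [hbF, Finset.card_image_of_injective _ hb, Finset.card_univ, Fintype.card_fin]
  -- real abbreviations
  set dxR : ℝ := (Dx.card : ℝ) with hdxR
  set dyR : ℝ := (Dy.card : ℝ) with hdyR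
  set DR : ℝ := (Δf.card : ℝ) with hDR
  have hdx1 : (1:ℝ) ≤ dxR := by
    rw [hdxR]; exact_mod_cast Finset.card_pos.2 ⟨y, hyDx⟩
  have hdy1 : (1:ℝ) ≤ dyR := by
    rw [hdyR]; exact_mod_cast Finset.card_pos.2 ⟨x, hxDy⟩
  have hdle : dyR ≤ dxR := by
    rw [hdxR, hdyR]; exact_mod_cast (hdegx ▸ hdegy ▸ hd)
  have hdxe : dxR = 1 + DR + (Rxf.card : ℝ) := by
    rw [hdxR, hDR]; exact_mod_cast congrArg (Nat.cast (R := ℝ)) hcardx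
  have hdye : dyR = 1 + DR + (Ryf.card : ℝ) := by
    rw [hdyR, hDR]; exact_mod_cast congrArg (Nat.cast (R := ℝ)) hcardy
  have hkxR : (k:ℝ) ≤ (Rxf.card : ℝ) := by exact_mod_cast hkx
  have hkyR : (k:ℝ) ≤ (Ryf.card : ℝ) := by exact_mod_cast hky
  -- distance facts
  have hdist1 : ∀ z, G.Adj x z → (G.dist z x : ℝ) ≤ 1 := by
    intro z hz
    have := G.dist_le hz.symm.toWalk
    have h2 : hz.symm.toWalk.length = 1 := by simp [SimpleGraph.Adj.toWalk]
    rw [h2] at this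
    exact_mod_cast this
  have hdist2 : ∀ w, G.Adj y w → (G.dist w x : ℝ) ≤ 2 := by
    intro w hw
    have := G.dist_le (SimpleGraph.Walk.cons hw.symm (SimpleGraph.Walk.cons hxy.symm
      SimpleGraph.Walk.nil))
    simp only [SimpleGraph.Walk.length_cons, SimpleGraph.Walk.length_nil] at this
    exact_mod_cast this
  -- the sup bound
  have hsup : sSup {t : ℝ | ∃ f : V → ℝ, Lip G f ∧ t = Ef G x f - Ef G y f}
      ≤ 3 - (3 * DR + (k:ℝ) + 2) / dxR := by
    apply csSup_le
    · refine ⟨0, fun _ => 0, fun u v => by simp, ?_⟩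
      simp [Ef]
    rintro t ⟨f, hf, rfl⟩
    set g : V → ℝ := fun v => f v - f x with hg
    have hg1 : ∀ z ∈ Dx, |g z| ≤ 1 := by
      intro z hz
      have hadj : G.Adj x z := by simpa [hDx] using hz
      exact le_trans (hf z x) (hdist1 z hadj)
    have hg2 : ∀ w ∈ Dy, |g w| ≤ 2 := by
      intro w hw
      have hadj : G.Adj y w := by simpa [hDy] using hw
      exact le_trans (hf w x) (hdist2 w hadj)
    have hgx : g x = 0 := sub_self _
    have hpair : ∀ i, g (a i) - g (b i) ≤ 2 := by
      intro i
      have h1 : f (a i) - f (b i) ≤ |f (a i) - f (b i)| := le_abs_self _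
      have h2 := hf (a i) (b i)
      have h3 : (G.dist (a i) (b i) : ℝ) ≤ 2 := by exact_mod_cast hab i
      have : g (a i) - g (b i) = f (a i) - f (b i) := by rw [hg]; ring
      linarith
    -- sum decompositions
    set A : ℝ := ∑ z ∈ Δf, g z with hA
    set Ma : ℝ := ∑ i, g (a i) with hMa
    set Mb : ℝ := ∑ i, g (b i) with hMb
    set Ua : ℝ := ∑ z ∈ Rxf \ aF, g z with hUa
    set Ub : ℝ := ∑ z ∈ Ryf \ bF, g z with hUb
    have hsumx : ∑ z ∈ Dx, g z = g y + A + Ma + Ua := by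
      have h1 : ∑ z ∈ Rxf, g z + ∑ z ∈ insert y Δf, g z = ∑ z ∈ Dx, g z :=
        Finset.sum_sdiff hsubx
      have h2 : ∑ z ∈ insert y Δf, g z = g y + A := Finset.sum_insert hyΔ
      have h3 : Ua + ∑ z ∈ aF, g z = ∑ z ∈ Rxf, g z := Finset.sum_sdiff haFsub
      have h4 : ∑ z ∈ aF, g z = Ma := by
        rw [haF, Finset.sum_image (fun u _ v _ h => ha h)]
      linarith [h1, h2, h3, h4]
    have hsumy : ∑ z ∈ Dy, g z = A + Mb + Ub := by
      have h1 : ∑ z ∈ Ryf, g z + ∑ z ∈ insert x Δf, g z = ∑ z ∈ Dy, g z :=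
        Finset.sum_sdiff hsuby
      have h2 : ∑ z ∈ insert x Δf, g z = g x + A := Finset.sum_insert hxΔ
      have h3 : Ub + ∑ z ∈ bF, g z = ∑ z ∈ Ryf, g z := Finset.sum_sdiff hbFsub
      have h4 : ∑ z ∈ bF, g z = Mb := by
        rw [hbF, Finset.sum_image (fun u _ v _ h => hb h)]
      rw [hgx] at h2
      linarith [h1, h2, h3, h4]
    -- individual sum bounds
    have hAub : A ≤ DR := by
      have := Finset.sum_le_card_nsmul Δf g 1
        (fun z hz => (abs_le.1 (hg1 z (Finset.mem_of_mem_inter_left hz))).2)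
      simpa [hDR] using this
    have hAlb : -DR ≤ A := by
      have := Finset.card_nsmul_le_sum Δf g (-1)
        (fun z hz => (abs_le.1 (hg1 z (Finset.mem_of_mem_inter_left hz))).1)
      simp only [nsmul_eq_mul, mul_neg, mul_one] at this
      rw [hDR, hA]; linarith
    have hgyub : g y ≤ 1 := (abs_le.1 (hg1 y hyDx)).2
    have hMab : Ma - Mb ≤ 2 * k := by
      have h1 : Ma - Mb = ∑ i, (g (a i) - g (b i)) := by
        rw [hMa, hMb]; exact (Finset.sum_sub_distrib ..).symm
      have h2 := Finset.sum_le_card_nsmul Finset.univ (fun i => g (a i) - g (b i)) 2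
        (fun i _ => hpair i)
      simp only [Finset.card_univ, Fintype.card_fin, nsmul_eq_mul] at h2
      rw [h1]; linarith
    have hMblb : -(2 * (k:ℝ)) ≤ Mb := by
      have h2 := Finset.card_nsmul_le_sum Finset.univ (fun i => g (b i)) (-2)
        (fun i _ => by
          have hbi : b i ∈ Ryf := hbFsub (Finset.mem_image_of_mem b (Finset.mem_univ i))
          have : b i ∈ Dy := (Finset.sdiff_subset) hbi
          exact (abs_le.1 (hg2 (b i) this)).1)
      simp only [Finset.card_univ, Fintype.card_fin, nsmul_eq_mul, mul_neg] at h2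
      rw [hMb]; linarith
    have hDR0 : (0:ℝ) ≤ DR := by rw [hDR]; positivity
    have hk0 : (0:ℝ) ≤ (k:ℝ) := by positivity
    have hUaub : Ua ≤ dxR - 1 - DR - k := by
      have hsu : Rxf \ aF ⊆ Dx := fun z hz =>
        Finset.sdiff_subset (Finset.sdiff_subset hz)
      have h := Finset.sum_le_card_nsmul (Rxf \ aF) g 1
        (fun z hz => (abs_le.1 (hg1 z (hsu hz))).2)
      have hc : (Rxf \ aF).card = Rxf.card - k := by
        rw [Finset.card_sdiff_of_subset haFsub, haFcard]
      rw [hc] at h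
      simp only [nsmul_eq_mul, mul_one] at h
      have hcast : ((Rxf.card - k : ℕ) : ℝ) = (Rxf.card : ℝ) - k := Nat.cast_sub hkx
      rw [hcast, ← hUa] at h
      linarith [hdxe, h]
    have hUblb : -(2*(dyR - 1 - DR - k)) ≤ Ub := by
      have hsu : Ryf \ bF ⊆ Dy := fun z hz =>
        Finset.sdiff_subset (Finset.sdiff_subset hz)
      have h := Finset.card_nsmul_le_sum (Ryf \ bF) g (-2)
        (fun z hz => (abs_le.1 (hg2 z (hsu hz))).1)
      have hc : (Ryf \ bF).card = Ryf.card - k := by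
        rw [Finset.card_sdiff_of_subset hbFsub, hbFcard]
      rw [hc] at h
      simp only [nsmul_eq_mul, mul_neg] at h
      have hcast : ((Ryf.card - k : ℕ) : ℝ) = (Ryf.card : ℝ) - k := Nat.cast_sub hky
      rw [hcast, ← hUb] at h
      linarith [hdye, h]
    have e1 : ∑ z ∈ Dx, g z = (∑ z ∈ Dx, f z) - dxR * f x := by
      rw [hg]
      rw [Finset.sum_sub_distrib, Finset.sum_const, nsmul_eq_mul, hdxR]
    have e2 : ∑ z ∈ Dy, g z = (∑ z ∈ Dy, f z) - dyR * f x := by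
      rw [hg]
      rw [Finset.sum_sub_distrib, Finset.sum_const, nsmul_eq_mul, hdyR]
    have hEfx : Ef G x f = (∑ z ∈ Dx, f z) / dxR := by
      rw [Ef_finset G x (hlf x), ← hDx, ← hdxR]
    have hEfy : Ef G y f = (∑ z ∈ Dy, f z) / dyR := by
      rw [Ef_finset G y (hlf y), ← hDy, ← hdyR]
    clear_value A Ma Mb Ua Ub dxR dyR DR
    have hdx0 : (0:ℝ) < dxR := by linarith
    have hdy0 : (0:ℝ) < dyR := by linarith
    have hq1 : 0 ≤ (dxR - dyR) * (A + DR) := mul_nonneg (by linarith) (by linarith)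
    have hq4 : 0 ≤ (dxR - dyR) * (Mb + 2*k) := mul_nonneg (by linarith) (by linarith)
    have hq7 : 0 ≤ (dxR - dyR) * (DR + 2) := mul_nonneg (by linarith) (by linarith)
    have hq2 : dyR * g y ≤ dyR * 1 := mul_le_mul_of_nonneg_left hgyub (by linarith)
    have hq3 : dyR * (Ma - Mb) ≤ dyR * (2*k) := mul_le_mul_of_nonneg_left hMab (by linarith)
    have hq5 : dyR * Ua ≤ dyR * (dxR - 1 - DR - k) := mul_le_mul_of_nonneg_left hUaub (by linarith)
    have hq6 : dxR * (-(2*(dyR - 1 - DR - k))) ≤ dxR * Ub :=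
      mul_le_mul_of_nonneg_left hUblb (by linarith)
    have hpoly : dyR * (g y + A + Ma + Ua) - dxR * (A + Mb + Ub)
        ≤ 3*dxR*dyR - (3*DR + (k:ℝ) + 2)*dyR := by
      linarith only [hq1, hq2, hq3, hq4, hq5, hq6, hq7]
    have hEd : Ef G x f - Ef G y f
        = (dyR * (g y + A + Ma + Ua) - dxR * (A + Mb + Ub)) / (dxR * dyR) := by
      rw [← hsumx, ← hsumy, e1, e2, hEfx, hEfy]
      field_simp
      ring
    rw [hEd]
    have htarget : (3*dxR*dyR - (3*DR + (k:ℝ) + 2)*dyR) / (dxR*dyR)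
        = 3 - (3*DR + (k:ℝ) + 2)/dxR := by
      field_simp
    rw [← htarget]
    gcongr
  have hDreq : ((G.neighborSet x ∩ G.neighborSet y).ncard : ℝ) = DR := by
    rw [← hΔ, Set.ncard_coe_finset, hDR]
  have hdegreq : ((deg G x : ℕ) : ℝ) = dxR := by
    rw [hdegx, hdxR]
  rw [ge_iff_le, kappa, hDreq, hdegreq]
  linarith [hsup]

/-- **2-matching lower bound for the Ricci curvature.** If there is a 2-matching of size
`k ≤ |R(x)| ∧ |R(y)|` between `R(x)` and `R(y)`, then
`κ(x,y) ≥ -2 + (3|Δ| + k + 2)/(dₓ ∨ d_y)`; if moreover `k = |R(x)| ∧ |R(y)|`, then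
`κ(x,y) ≥ -2 + (2|Δ| + (dₓ ∧ d_y) + 1)/(dₓ ∨ d_y)`. -/
theorem kappa_two_matching_lower_bound {V : Type*} (G : SimpleGraph V)
    (hlf : ∀ v : V, (G.neighborSet v).Finite) (hG : G.Connected)
    (x y : V) (hxy : G.Adj x y) (k : ℕ)
    (hk : k ≤ min (Rside G x y).ncard (Rside G y x).ncard)
    (hmatch : TwoMatchingBetween G (Rside G x y) (Rside G y x) k) :
    kappa G x y ≥ -2 +
      (3 * ((G.neighborSet x ∩ G.neighborSet y).ncard : ℝ) + (k : ℝ) + 2) /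
        (max (deg G x) (deg G y) : ℝ) ∧
    (k = min (Rside G x y).ncard (Rside G y x).ncard →
      kappa G x y ≥ -2 +
        (2 * ((G.neighborSet x ∩ G.neighborSet y).ncard : ℝ) +
          (min (deg G x) (deg G y) : ℝ) + 1) / (max (deg G x) (deg G y) : ℝ)) := by
  have hdecx := deg_decomp G hlf x y hxy
  have hdecy := deg_decomp G hlf y x hxy.symm
  have hΔcomm : (G.neighborSet y ∩ G.neighborSet x) = (G.neighborSet x ∩ G.neighborSet y) :=
    Set.inter_comm _ _
  have main : kappa G x y ≥ -2 +
      (3 * ((G.neighborSet x ∩ G.neighborSet y).ncard : ℝ) + (k : ℝ) + 2) /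
        (max (deg G x) (deg G y) : ℝ) := by
    rcases le_total (deg G y) (deg G x) with hle | hle
    · have hleR : ((deg G y : ℕ) : ℝ) ≤ ((deg G x : ℕ) : ℝ) := by exact_mod_cast hle
      rw [max_eq_left hleR]
      exact main_bound G hlf x y hxy k hk hmatch hle
    · have hleR : ((deg G x : ℕ) : ℝ) ≤ ((deg G y : ℕ) : ℝ) := by exact_mod_cast hle
      rw [max_eq_right hleR, kappa_symm G hlf x y, ← hΔcomm]
      apply main_bound G hlf y x hxy.symm k (by rwa [min_comm]) ?_ hle
      obtain ⟨a, b, ha, hb, haR, hbR, hab⟩ := hmatch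
      exact ⟨b, a, hb, ha, hbR, haR, fun i => by rw [G.dist_comm]; exact hab i⟩
  refine ⟨main, fun hkeq => ?_⟩
  rw [hΔcomm] at hdecy
  have hN : 3 * (G.neighborSet x ∩ G.neighborSet y).ncard + k + 2
      = 2 * (G.neighborSet x ∩ G.neighborSet y).ncard + min (deg G x) (deg G y) + 1 := by
    omega
  have hNR : 3 * ((G.neighborSet x ∩ G.neighborSet y).ncard : ℝ) + (k : ℝ) + 2
      = 2 * ((G.neighborSet x ∩ G.neighborSet y).ncard : ℝ) +
        (min (deg G x) (deg G y) : ℝ) + 1 := by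
    have h := congrArg (Nat.cast (R := ℝ)) hN
    push_cast at h
    linarith
  rw [← hNR]
  exact main
end

section
/- Fix ε ∈ (0,1) and a sequence p_n ∈ [0,1]. Let G(n,n,p_n) be the random bipartite graph with parts A_n, B_n of size n in which each of the n² possible edges between A_n and B_n is present independently with probability p_n. If n·p_n → 0, then the probability that G(n,n,p_n) contains a matching of size at least n(1−ε) tends to 0 as n → ∞. If n·p_n → ∞, then this probability tends to 1 as n → ∞. -/
open MeasureTheory Filter Finset
open scoped ENNReal

/-- The law of the random bipartite graph `G(n,n,p)`: the `n²` indicators of the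
possible edges between the two parts (both identified with `Fin n`) are independent
Bernoulli(`p`) random variables. -/
noncomputable def bipMeasure (n : ℕ) (p : ℝ≥0∞) (hp : p ≤ 1) :
    Measure (Fin n × Fin n → Bool) :=
  Measure.pi fun _ => (PMF.bernoulli p.toNNReal (ENNReal.toNNReal_mono ENNReal.one_ne_top hp)).toMeasure

/-- The bipartite graph encoded by `ω` contains a matching of size at least `m`:
a set of pairwise vertex-disjoint present edges of cardinality at least `m`. -/
def HasMatchingOfSize (n : ℕ) (ω : Fin n × Fin n → Bool) (m : ℝ) : Prop :=
  ∃ s : Finset (Fin n × Fin n), m ≤ (s.card : ℝ) ∧ (∀ e ∈ s, ω e = true) ∧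
    ∀ e ∈ s, ∀ e' ∈ s, e ≠ e' → e.1 ≠ e'.1 ∧ e.2 ≠ e'.2

lemma bern_true (p : ℝ≥0∞) (hp : p ≤ 1) :
    (PMF.bernoulli p.toNNReal (ENNReal.toNNReal_mono ENNReal.one_ne_top hp)).toMeasure {true} = p := by
  rw [PMF.toMeasure_apply_singleton _ _ (measurableSet_singleton _)]
  show ((p.toNNReal : NNReal) : ℝ≥0∞) = p
  exact ENNReal.coe_toNNReal (ne_top_of_le_ne_top ENNReal.one_ne_top hp)

lemma bern_false (p : ℝ≥0∞) (hp : p ≤ 1) :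
    (PMF.bernoulli p.toNNReal (ENNReal.toNNReal_mono ENNReal.one_ne_top hp)).toMeasure {false} = 1 - p := by
  rw [PMF.toMeasure_apply_singleton _ _ (measurableSet_singleton _)]
  show ((1 - p.toNNReal : NNReal) : ℝ≥0∞) = 1 - p
  rw [ENNReal.coe_sub, ENNReal.coe_one, ENNReal.coe_toNNReal (ne_top_of_le_ne_top ENNReal.one_ne_top hp)]

lemma bip_cylinder (n : ℕ) (p : ℝ≥0∞) (hp : p ≤ 1) (F : Finset (Fin n × Fin n))
    (v : Fin n × Fin n → Bool) :
    bipMeasure n p hp {ω | ∀ e ∈ F, ω e = v e}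
      = ∏ e ∈ F, (PMF.bernoulli p.toNNReal (ENNReal.toNNReal_mono ENNReal.one_ne_top hp)).toMeasure {v e} := by
  classical
  have hs : {ω : Fin n × Fin n → Bool | ∀ e ∈ F, ω e = v e}
      = Set.pi Set.univ (fun e => if e ∈ F then {v e} else Set.univ) := by
    ext ω
    simp only [Set.mem_setOf_eq, Set.mem_pi, Set.mem_univ, forall_true_left]
    constructor
    · intro h e; split_ifs with he
      · simp [h e he]
      · trivial
    · intro h e he; have := h e; rw [if_pos he] at this; simpa using this
  rw [hs, bipMeasure, Measure.pi_pi]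
  simp_rw [apply_ite ((PMF.bernoulli p.toNNReal (ENNReal.toNNReal_mono ENNReal.one_ne_top hp)).toMeasure), measure_univ]
  rw [Finset.prod_ite_mem Finset.univ F
    (fun e => (PMF.bernoulli p.toNNReal (ENNReal.toNNReal_mono ENNReal.one_ne_top hp)).toMeasure {v e}), Finset.univ_inter]

lemma bip_eval_true (n : ℕ) (p : ℝ≥0∞) (hp : p ≤ 1) (e : Fin n × Fin n) :
    bipMeasure n p hp {ω | ω e = true} = p := by
  have : {ω : Fin n × Fin n → Bool | ω e = true}
      = {ω | ∀ e' ∈ ({e} : Finset (Fin n × Fin n)), ω e' = (fun _ => true) e'} := by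
    ext ω; simp
  rw [this, bip_cylinder, Finset.prod_singleton, bern_true p hp]

lemma bip_block (n : ℕ) (p : ℝ≥0∞) (hp : p ≤ 1) (S T : Finset (Fin n)) :
    bipMeasure n p hp {ω | ∀ a ∈ S, ∀ b ∈ T, ω (a, b) = false}
      = (1 - p) ^ (S.card * T.card) := by
  have : {ω : Fin n × Fin n → Bool | ∀ a ∈ S, ∀ b ∈ T, ω (a, b) = false}
      = {ω | ∀ e ∈ S ×ˢ T, ω e = (fun _ => false) e} := by
    ext ω
    simp only [Set.mem_setOf_eq, Finset.mem_product]
    constructor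
    · rintro h ⟨a, b⟩ ⟨ha, hb⟩; exact h a ha b hb
    · intro h a ha b hb; exact h (a, b) ⟨ha, hb⟩
  rw [this, bip_cylinder]
  simp_rw [bern_false p hp]
  rw [Finset.prod_const, Finset.card_product]

lemma lintegral_edge_count (n : ℕ) (p : ℝ≥0∞) (hp : p ≤ 1) :
    ∫⁻ ω, (((Finset.univ.filter fun e => ω e = true).card : ℕ) : ℝ≥0∞)
        ∂ bipMeasure n p hp = (n : ℝ≥0∞) ^ 2 * p := by
  classical
  have h1 : ∀ ω : Fin n × Fin n → Bool,
      (((Finset.univ.filter fun e => ω e = true).card : ℕ) : ℝ≥0∞)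
        = ∑ e : Fin n × Fin n, if ω e = true then (1 : ℝ≥0∞) else 0 := by
    intro ω
    rw [Finset.card_filter]
    push_cast
    simp
  simp_rw [h1]
  rw [lintegral_finset_sum]
  · have h2 : ∀ e : Fin n × Fin n,
        ∫⁻ ω, (if ω e = true then (1 : ℝ≥0∞) else 0) ∂ bipMeasure n p hp = p := by
      intro e
      have : ∀ ω : Fin n × Fin n → Bool, (if ω e = true then (1 : ℝ≥0∞) else 0)
          = {ω : Fin n × Fin n → Bool | ω e = true}.indicator (fun _ => 1) ω := by
        intro ω; by_cases h : ω e = true <;> simp [h, Set.indicator]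
      simp_rw [this]
      rw [lintegral_indicator (Set.Finite.measurableSet (Set.toFinite _))]
      simp [bip_eval_true n p hp e]
    simp_rw [h2]
    rw [Finset.sum_const]
    simp [Finset.card_univ, mul_comm, sq]
  · intro e _
    exact measurable_of_countable _

lemma matching_le_edges {n : ℕ} {ω : Fin n × Fin n → Bool} {m : ℝ}
    (h : HasMatchingOfSize n ω m) :
    m ≤ (((Finset.univ.filter fun e => ω e = true).card : ℕ) : ℝ) := by
  classical
  obtain ⟨s, hm, hω, -⟩ := h
  refine hm.trans ?_
  exact_mod_cast Finset.card_le_card fun e he => Finset.mem_filter.mpr ⟨Finset.mem_univ _, hω e he⟩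

lemma exists_empty_block {n : ℕ} {ω : Fin n × Fin n → Bool} {m : ℝ}
    (h : ¬ HasMatchingOfSize n ω m) {t : ℕ}
    (ht : ∀ k : ℕ, (k : ℝ) < m → t + k ≤ n) :
    ∃ S T : Finset (Fin n), S.card = t ∧ T.card = t ∧
      ∀ a ∈ S, ∀ b ∈ T, ω (a, b) = false := by
  classical
  -- the finset of all matchings
  set M : Finset (Finset (Fin n × Fin n)) :=
    Finset.univ.filter (fun s => (∀ e ∈ s, ω e = true) ∧
      ∀ e ∈ s, ∀ e' ∈ s, e ≠ e' → e.1 ≠ e'.1 ∧ e.2 ≠ e'.2) with hM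
  have hMne : M.Nonempty := ⟨∅, by simp [hM]⟩
  obtain ⟨s₀, hs₀M, hmax⟩ := M.exists_max_image Finset.card hMne
  rw [hM, Finset.mem_filter] at hs₀M
  obtain ⟨-, hs₀ω, hs₀inj⟩ := hs₀M
  have hcard : (s₀.card : ℝ) < m := by
    by_contra hc
    exact h ⟨s₀, le_of_not_gt hc, hs₀ω, hs₀inj⟩
  set A : Finset (Fin n) := Finset.univ \ s₀.image Prod.fst with hA
  set B : Finset (Fin n) := Finset.univ \ s₀.image Prod.snd with hB
  have hAcard : t ≤ A.card := by
    rw [hA, Finset.card_sdiff_of_subset (Finset.subset_univ _), Finset.card_univ, Fintype.card_fin]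
    have h1 : (s₀.image Prod.fst).card ≤ s₀.card := Finset.card_image_le
    have h2 : t + s₀.card ≤ n := ht s₀.card hcard
    omega
  have hBcard : t ≤ B.card := by
    rw [hB, Finset.card_sdiff_of_subset (Finset.subset_univ _), Finset.card_univ, Fintype.card_fin]
    have h1 : (s₀.image Prod.snd).card ≤ s₀.card := Finset.card_image_le
    have h2 : t + s₀.card ≤ n := ht s₀.card hcard
    omega
  have hblock : ∀ a ∈ A, ∀ b ∈ B, ω (a, b) = false := by
    intro a ha b hb
    by_contra hab
    rw [Bool.not_eq_false] at hab
    rw [hA, Finset.mem_sdiff] at ha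
    rw [hB, Finset.mem_sdiff] at hb
    have hanotin : ∀ e ∈ s₀, e.1 ≠ a := by
      intro e he
      intro hc
      exact ha.2 (Finset.mem_image.mpr ⟨e, he, hc⟩)
    have hbnotin : ∀ e ∈ s₀, e.2 ≠ b := by
      intro e he hc
      exact hb.2 (Finset.mem_image.mpr ⟨e, he, hc⟩)
    have hnotmem : (a, b) ∉ s₀ := fun hc => hanotin _ hc rfl
    have hins : insert (a, b) s₀ ∈ M := by
      rw [hM, Finset.mem_filter]
      refine ⟨Finset.mem_univ _, ?_, ?_⟩
      · intro e he
        rcases Finset.mem_insert.mp he with rfl | he'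
        · exact hab
        · exact hs₀ω e he'
      · intro e he e' he' hne
        rcases Finset.mem_insert.mp he with rfl | he₁ <;>
          rcases Finset.mem_insert.mp he' with rfl | he₂
        · exact absurd rfl hne
        · exact ⟨fun hc => hanotin _ he₂ hc.symm, fun hc => hbnotin _ he₂ hc.symm⟩
        · exact ⟨hanotin _ he₁, hbnotin _ he₁⟩
        · exact hs₀inj e he₁ e' he₂ hne
    have := hmax _ hins
    rw [Finset.card_insert_of_notMem hnotmem] at this
    omega
  obtain ⟨S, hSA, hScard⟩ := Finset.exists_subset_card_eq hAcard
  obtain ⟨T, hTB, hTcard⟩ := Finset.exists_subset_card_eq hBcard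
  exact ⟨S, T, hScard, hTcard, fun a ha b hb => hblock a (hSA ha) b (hTB hb)⟩

instance (n : ℕ) (p : ℝ≥0∞) (hp : p ≤ 1) : IsProbabilityMeasure (bipMeasure n p hp) := by
  unfold bipMeasure; infer_instance

lemma part1_bound (n : ℕ) (hn : 1 ≤ n) (q : ℝ) (hq1 : q ≤ 1)
    (ε : ℝ) (hε1 : ε < 1) :
    bipMeasure n (ENNReal.ofReal q) (ENNReal.ofReal_le_one.mpr hq1)
      {ω | HasMatchingOfSize n ω ((n : ℝ) * (1 - ε))}
      ≤ ENNReal.ofReal ((n : ℝ) * q / (1 - ε)) := by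
  have hnpos : (0:ℝ) < n := by exact_mod_cast hn
  have hεpos : (0:ℝ) < 1 - ε := by linarith
  have hmpos : (0:ℝ) < (n : ℝ) * (1 - ε) := mul_pos hnpos hεpos
  set μ := bipMeasure n (ENNReal.ofReal q) (ENNReal.ofReal_le_one.mpr hq1) with hμ
  have hsub : {ω : Fin n × Fin n → Bool | HasMatchingOfSize n ω ((n : ℝ) * (1 - ε))}
      ⊆ {ω | ENNReal.ofReal ((n : ℝ) * (1 - ε))
          ≤ (((Finset.univ.filter fun e => ω e = true).card : ℕ) : ℝ≥0∞)} := by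
    intro ω hω
    have := matching_le_edges hω
    calc ENNReal.ofReal ((n : ℝ) * (1 - ε)) ≤ ENNReal.ofReal _ :=
          ENNReal.ofReal_le_ofReal this
      _ = _ := ENNReal.ofReal_natCast _
  calc μ _ ≤ μ {ω | ENNReal.ofReal ((n : ℝ) * (1 - ε))
          ≤ (((Finset.univ.filter fun e => ω e = true).card : ℕ) : ℝ≥0∞)} :=
        measure_mono hsub
    _ ≤ (∫⁻ ω, (((Finset.univ.filter fun e => ω e = true).card : ℕ) : ℝ≥0∞) ∂ μ)
          / ENNReal.ofReal ((n : ℝ) * (1 - ε)) :=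
        meas_ge_le_lintegral_div (measurable_of_countable _).aemeasurable
          (ne_of_gt (ENNReal.ofReal_pos.mpr hmpos)) ENNReal.ofReal_ne_top
    _ = ((n : ℝ≥0∞) ^ 2 * ENNReal.ofReal q) / ENNReal.ofReal ((n : ℝ) * (1 - ε)) := by
        rw [hμ, lintegral_edge_count]
    _ = ENNReal.ofReal ((n : ℝ) ^ 2 * q) / ENNReal.ofReal ((n : ℝ) * (1 - ε)) := by
        rw [← ENNReal.ofReal_natCast n, ← ENNReal.ofReal_pow (Nat.cast_nonneg n),
          ← ENNReal.ofReal_mul (by positivity)]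
    _ = ENNReal.ofReal ((n : ℝ) ^ 2 * q / ((n : ℝ) * (1 - ε))) :=
        (ENNReal.ofReal_div_of_pos hmpos).symm
    _ = ENNReal.ofReal ((n : ℝ) * q / (1 - ε)) := by
        congr 1
        field_simp

lemma my_choose_le_two_pow (n t : ℕ) : n.choose t ≤ 2 ^ n := by
  rcases le_or_gt t n with h | h
  · calc n.choose t ≤ ∑ i ∈ Finset.range (n + 1), n.choose i :=
        Finset.single_le_sum (fun i _ => Nat.zero_le _)
          (Finset.mem_range.mpr (Nat.lt_succ_of_le h))
      _ = 2 ^ n := Nat.sum_range_choose n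
  · rw [Nat.choose_eq_zero_of_lt h]; exact Nat.zero_le _

lemma part2_bound (n : ℕ) (q : ℝ) (hq0 : 0 ≤ q) (hq1 : q ≤ 1)
    (ε : ℝ) (hε0 : 0 < ε) (hε1 : ε < 1) :
    bipMeasure n (ENNReal.ofReal q) (ENNReal.ofReal_le_one.mpr hq1)
      {ω | HasMatchingOfSize n ω ((n : ℝ) * (1 - ε))}ᶜ
      ≤ ENNReal.ofReal ((4:ℝ) ^ n
          * (1 - q) ^ (⌈ε * (n:ℝ)⌉₊ * ⌈ε * (n:ℝ)⌉₊)) := by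
  classical
  set t := ⌈ε * (n:ℝ)⌉₊ with htdef
  set μ := bipMeasure n (ENNReal.ofReal q) (ENNReal.ofReal_le_one.mpr hq1) with hμ
  set P := Finset.powersetCard t (Finset.univ : Finset (Fin n)) with hP
  have ht : ∀ k : ℕ, (k : ℝ) < (n : ℝ) * (1 - ε) → t + k ≤ n := by
    intro k hk
    have hkn : k < n := by
      by_contra hc
      push_neg at hc
      have : (n:ℝ) ≤ (k:ℝ) := by exact_mod_cast hc
      nlinarith
    have h1 : t ≤ n - k := by
      rw [htdef]
      rw [Nat.ceil_le]
      have : ((n - k : ℕ) : ℝ) = (n:ℝ) - (k:ℝ) := by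
        rw [Nat.cast_sub hkn.le]
      rw [this]
      nlinarith
    omega
  have hsub : {ω : Fin n × Fin n → Bool | HasMatchingOfSize n ω ((n : ℝ) * (1 - ε))}ᶜ
      ⊆ ⋃ ST ∈ P ×ˢ P, {ω : Fin n × Fin n → Bool |
          ∀ a ∈ ST.1, ∀ b ∈ ST.2, ω (a, b) = false} := by
    intro ω hω
    obtain ⟨S, T, hS, hT, hblock⟩ := exists_empty_block hω ht
    have hmem : ((S, T) : Finset (Fin n) × Finset (Fin n)) ∈ P ×ˢ P := by
      exact Finset.mem_product.mpr ⟨Finset.mem_powersetCard.mpr ⟨Finset.subset_univ _, hS⟩,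
        Finset.mem_powersetCard.mpr ⟨Finset.subset_univ _, hT⟩⟩
    exact Set.mem_biUnion hmem (show ω ∈ {ω : Fin n × Fin n → Bool |
      ∀ a ∈ S, ∀ b ∈ T, ω (a, b) = false} from hblock)
  calc μ _ ≤ μ (⋃ ST ∈ P ×ˢ P, {ω : Fin n × Fin n → Bool |
          ∀ a ∈ ST.1, ∀ b ∈ ST.2, ω (a, b) = false}) := measure_mono hsub
    _ ≤ ∑ ST ∈ P ×ˢ P, μ {ω : Fin n × Fin n → Bool |
          ∀ a ∈ ST.1, ∀ b ∈ ST.2, ω (a, b) = false} := measure_biUnion_finset_le _ _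
    _ ≤ (P ×ˢ P).card • ((1 - ENNReal.ofReal q) ^ (t * t)) := by
        refine Finset.sum_le_card_nsmul _ _ _ ?_
        rintro ⟨S, T⟩ hST
        rw [Finset.mem_product] at hST
        obtain ⟨hS, hT⟩ := hST
        rw [hμ, bip_block, (Finset.mem_powersetCard.mp hS).2,
          (Finset.mem_powersetCard.mp hT).2]
    _ = ((P ×ˢ P).card : ℝ≥0∞) * ((1 - ENNReal.ofReal q) ^ (t * t)) := by
        rw [nsmul_eq_mul]
    _ ≤ ((4 ^ n : ℕ) : ℝ≥0∞) * ((1 - ENNReal.ofReal q) ^ (t * t)) := by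
        refine mul_le_mul_left (Nat.cast_le.mpr ?_) _
        rw [Finset.card_product, hP, Finset.card_powersetCard, Finset.card_univ,
          Fintype.card_fin]
        calc n.choose t * n.choose t ≤ 2 ^ n * 2 ^ n :=
            Nat.mul_le_mul (my_choose_le_two_pow n t) (my_choose_le_two_pow n t)
          _ = 4 ^ n := by rw [← mul_pow]; norm_num
    _ = ENNReal.ofReal ((4:ℝ) ^ n * (1 - q) ^ (t * t)) := by
        have h1 : (1 : ℝ≥0∞) - ENNReal.ofReal q = ENNReal.ofReal (1 - q) := by
          rw [ENNReal.ofReal_sub _ hq0, ENNReal.ofReal_one]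
        rw [h1, ← ENNReal.ofReal_pow (by linarith), ← ENNReal.ofReal_natCast,
          ← ENNReal.ofReal_mul (by positivity)]
        congr 2
        push_cast
        ring

lemma decay (ε : ℝ) (hε0 : 0 < ε) (p : ℕ → ℝ) (hp : ∀ n, p n ∈ Set.Icc (0:ℝ) 1)
    (hinf : Tendsto (fun n : ℕ => (n : ℝ) * p n) atTop atTop) :
    Tendsto (fun n : ℕ => (4:ℝ) ^ n
        * (1 - p n) ^ (⌈ε * (n:ℝ)⌉₊ * ⌈ε * (n:ℝ)⌉₊)) atTop (nhds 0) := by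
  have hexp : Tendsto (fun n : ℕ => Real.exp (-(n:ℝ))) atTop (nhds 0) :=
    Real.tendsto_exp_neg_atTop_nhds_zero.comp tendsto_natCast_atTop_atTop
  refine squeeze_zero' ?_ ?_ hexp
  · filter_upwards with n
    have h1 := (hp n).2
    have h2 : (0:ℝ) ≤ 1 - p n := by linarith
    positivity
  · have hev := hinf.eventually_ge_atTop ((Real.log 4 + 1) / ε ^ 2)
    filter_upwards [hev] with n hn
    set t := ⌈ε * (n:ℝ)⌉₊ with htdef
    have hq0 := (hp n).1
    have hq1 := (hp n).2
    have h1q : (0:ℝ) ≤ 1 - p n := by linarith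
    have hle : (1 - p n) ≤ Real.exp (-(p n)) := by
      have := Real.add_one_le_exp (-(p n))
      linarith
    have hlog4 : (0:ℝ) < Real.log 4 := Real.log_pos (by norm_num)
    have htge : ε * (n:ℝ) ≤ (t:ℝ) := Nat.le_ceil _
    have hεn : (0:ℝ) ≤ ε * n := by positivity
    have hkey : (n : ℝ) * (Real.log 4 + 1) ≤ (p n) * ((t:ℝ) * (t:ℝ)) := by
      have h2 : ε ^ 2 * ((n:ℝ) * p n) ≥ ε ^ 2 * ((Real.log 4 + 1) / ε ^ 2) :=
        mul_le_mul_of_nonneg_left hn (by positivity)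
      have h3 : ε ^ 2 * ((Real.log 4 + 1) / ε ^ 2) = Real.log 4 + 1 := by
        field_simp
      have h4 : (ε * n) * (ε * n) ≤ (t:ℝ) * (t:ℝ) :=
        mul_le_mul htge htge hεn (by positivity)
      have h5 : p n * ((ε * n) * (ε * n)) ≤ p n * ((t:ℝ) * (t:ℝ)) :=
        mul_le_mul_of_nonneg_left h4 hq0
      nlinarith
    calc (4:ℝ) ^ n * (1 - p n) ^ (t * t)
        ≤ (4:ℝ) ^ n * (Real.exp (-(p n))) ^ (t * t) := by
          refine mul_le_mul_of_nonneg_left (pow_le_pow_left₀ h1q hle _) (by positivity)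
      _ = Real.exp ((n:ℝ) * Real.log 4) * Real.exp (((t * t : ℕ) : ℝ) * (-(p n))) := by
          rw [Real.exp_nat_mul, Real.exp_nat_mul, Real.exp_log (by norm_num : (0:ℝ) < 4)]
      _ = Real.exp ((n:ℝ) * Real.log 4 + ((t * t : ℕ) : ℝ) * (-(p n))) := by
          rw [Real.exp_add]
      _ ≤ Real.exp (-(n:ℝ)) := by
          apply Real.exp_le_exp.mpr
          push_cast
          nlinarith

/-- **Near-perfect matchings in random bipartite graphs.** For `ε ∈ (0,1)`, the
probability that `G(n,n,pₙ)` contains a matching of size `n(1−ε)` tends to `0` if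
`n pₙ → 0`, and tends to `1` if `n pₙ → ∞`. -/
theorem random_bipartite_matching (ε : ℝ) (hε : ε ∈ Set.Ioo (0 : ℝ) 1)
    (p : ℕ → ℝ) (hp : ∀ n, p n ∈ Set.Icc (0 : ℝ) 1) :
    (Tendsto (fun n : ℕ => (n : ℝ) * p n) atTop (nhds 0) →
      Tendsto (fun n : ℕ =>
          bipMeasure n (ENNReal.ofReal (p n)) (ENNReal.ofReal_le_one.mpr (hp n).2)
            {ω | HasMatchingOfSize n ω ((n : ℝ) * (1 - ε))})
        atTop (nhds 0)) ∧
    (Tendsto (fun n : ℕ => (n : ℝ) * p n) atTop atTop →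
      Tendsto (fun n : ℕ =>
          bipMeasure n (ENNReal.ofReal (p n)) (ENNReal.ofReal_le_one.mpr (hp n).2)
            {ω | HasMatchingOfSize n ω ((n : ℝ) * (1 - ε))})
        atTop (nhds 1)) := by
  obtain ⟨hε0, hε1⟩ := hε
  constructor
  · intro h0
    refine tendsto_of_tendsto_of_tendsto_of_le_of_le'
      (h := fun n : ℕ => ENNReal.ofReal ((n:ℝ) * p n / (1 - ε))) tendsto_const_nhds ?_
      (Eventually.of_forall fun n => zero_le) ?_
    · have h1 : Tendsto (fun n : ℕ => (n:ℝ) * p n / (1 - ε)) atTop (nhds (0 / (1 - ε))) :=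
        h0.div_const _
      rw [zero_div] at h1
      have h2 := ENNReal.tendsto_ofReal h1
      simpa using h2
    · filter_upwards [eventually_ge_atTop 1] with n hn
      exact part1_bound n hn (p n) (hp n).2 ε hε1
  · intro hinf
    have hbad : Tendsto (fun n : ℕ =>
        bipMeasure n (ENNReal.ofReal (p n)) (ENNReal.ofReal_le_one.mpr (hp n).2)
          {ω | HasMatchingOfSize n ω ((n : ℝ) * (1 - ε))}ᶜ) atTop (nhds 0) := by
      refine tendsto_of_tendsto_of_tendsto_of_le_of_le'
        (h := fun n : ℕ => ENNReal.ofReal ((4:ℝ) ^ n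
          * (1 - p n) ^ (⌈ε * (n:ℝ)⌉₊ * ⌈ε * (n:ℝ)⌉₊))) tendsto_const_nhds ?_
        (Eventually.of_forall fun n => zero_le)
        (Eventually.of_forall fun n => part2_bound n (p n) (hp n).1 (hp n).2 ε hε0 hε1)
      have h2 := ENNReal.tendsto_ofReal (decay ε hε0 p hp hinf)
      simpa using h2
    have h1 : Tendsto (fun n : ℕ => 1 -
        bipMeasure n (ENNReal.ofReal (p n)) (ENNReal.ofReal_le_one.mpr (hp n).2)
          {ω | HasMatchingOfSize n ω ((n : ℝ) * (1 - ε))}ᶜ) atTop (nhds (1 - 0)) :=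
      ENNReal.Tendsto.sub tendsto_const_nhds hbad (Or.inl ENNReal.one_ne_top)
    rw [tsub_zero] at h1
    refine h1.congr fun n => ?_
    rw [prob_compl_eq_one_sub (Set.toFinite _).measurableSet,
      ENNReal.sub_sub_cancel ENNReal.one_ne_top prob_le_one]
end
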